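/- arXiv:2107.14504 — 5 statements merged into one kernel-verified Lean document; each statement's English description precedes it below -/
import Mathlib

section
/- Let A be a 2n × 2n antisymmetric matrix with entries A_{ij} = g(x_i) h(x_j) for i < j, where x_1 < x_2 < ... < x_{2n} are real numbers and g, h : ℝ → ℝ are functions. Then the Pfaffian of A equals the alternating product ∏_{i=1}^{n} g(x_{2i-1}) h(x_{2i}). -/
/-- The Pfaffian of a `2n × 2n` real matrix, defined by
`pf(A) = (1/(2^n n!)) ∑_{σ} sgn(σ) ∏_{i=1}^n A_{σ(2i-1), σ(2i)}`. -/
noncomputable def pfaffian {n : ℕ} (A : Matrix (Fin (2*n)) (Fin (2*n)) ℝ) : ℝ :=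
  (1 / ((2:ℝ)^n * n.factorial)) *
    ∑ σ : Equiv.Perm (Fin (2*n)),
      ((Equiv.Perm.sign σ : ℤ) : ℝ) *
        ∏ i : Fin n,
          A (σ ⟨2*(i:ℕ), by have := i.isLt; omega⟩)
            (σ ⟨2*(i:ℕ)+1, by have := i.isLt; omega⟩)

/-!
Write `P(A) = ∑_σ sgn σ ∏_i A_{σ(2i), σ(2i+1)}`, so that `pf A = P(A) / (2ⁿ n!)`.
Composing `σ` on the right with a permutation of the pairs `{2i, 2i+1}`, or with the flip of one
pair, does not change its term (the flip changes the sign of `σ` and of one antisymmetric entry).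
These moves take position `0` to any position, so `P(A)` is `2n` times the sum over the `σ`
fixing `0`; splitting off `σ 1 = q + 1` gives the first-row expansion
`P(A) = 2n ∑_q (-1)^q A_{0,q+1} P(A with rows and columns 0, q+1 deleted)`.
For `A_{ij} = a_i b_j` (`i < j`) every such minor is again of this form, so by induction the
expansion becomes an alternating sum of products of `a`'s and `b`'s. It collapses to its `q = 0`
term `a₀ b₁ ∏ a_{2i} b_{2i+1}`: the terms deleting an index `≥ 2` keep the factor `a₀ b₁` and
reproduce the same sum one size down, which by induction cancels the term deleting index `1`.
-/

open Equiv Equiv.Perm Finset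
open scoped Nat

namespace Pfaffian

variable {R : Type*} [CommRing R] {n : ℕ}

def pairFst (i : Fin n) : Fin (2 * n) := ⟨2 * i, by omega⟩

def pairSnd (i : Fin n) : Fin (2 * n) := ⟨2 * i + 1, by omega⟩

lemma pairFst_injective : Function.Injective (pairFst (n := n)) :=
  fun i j h => Fin.ext (by simpa [pairFst] using h)

lemma pairSnd_injective : Function.Injective (pairSnd (n := n)) :=
  fun i j h => Fin.ext (by simpa [pairSnd] using h)

lemma pairFst_ne_pairSnd (i j : Fin n) : pairFst i ≠ pairSnd j := by
  simp only [pairFst, pairSnd, ne_eq, Fin.ext_iff]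
  omega

def pfaffianTerm (A : Matrix (Fin (2 * n)) (Fin (2 * n)) R) (σ : Perm (Fin (2 * n))) : R :=
  ((sign σ : ℤ) : R) * ∏ i, A (σ (pairFst i)) (σ (pairSnd i))

lemma pfaffian_eq_inv_mul_sum (A : Matrix (Fin (2 * n)) (Fin (2 * n)) ℝ) :
    pfaffian A = ((2 : ℝ) ^ n * n !)⁻¹ * ∑ σ, pfaffianTerm A σ := by
  rw [pfaffian, one_div]
  rfl

def pairSwap (j k : Fin n) : Perm (Fin (2 * n)) :=
  swap (pairFst j) (pairFst k) * swap (pairSnd j) (pairSnd k)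

lemma pairSwap_pairFst (j k i : Fin n) : pairSwap j k (pairFst i) = pairFst (swap j k i) := by
  rw [pairSwap, Perm.mul_apply,
    swap_apply_of_ne_of_ne (pairFst_ne_pairSnd _ _) (pairFst_ne_pairSnd _ _),
    pairFst_injective.swap_apply]

lemma pairSwap_pairSnd (j k i : Fin n) : pairSwap j k (pairSnd i) = pairSnd (swap j k i) := by
  rw [pairSwap, Perm.mul_apply, pairSnd_injective.swap_apply,
    swap_apply_of_ne_of_ne (pairFst_ne_pairSnd _ _).symm (pairFst_ne_pairSnd _ _).symm]

lemma sign_pairSwap (j k : Fin n) : sign (pairSwap j k) = 1 := by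
  simp only [pairSwap, map_mul, sign_swap', pairFst_injective.eq_iff, pairSnd_injective.eq_iff]
  split_ifs <;> rfl

section Symmetry

variable (A : Matrix (Fin (2 * n)) (Fin (2 * n)) R)

lemma pfaffianTerm_mul_pairSwap (σ : Perm (Fin (2 * n))) (j k : Fin n) :
    pfaffianTerm A (σ * pairSwap j k) = pfaffianTerm A σ := by
  simp only [pfaffianTerm, map_mul, sign_pairSwap, mul_one, Perm.mul_apply, pairSwap_pairFst,
    pairSwap_pairSnd]
  congr 1
  exact Equiv.prod_comp (swap j k) fun i => A (σ (pairFst i)) (σ (pairSnd i))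

lemma pfaffianTerm_mul_swap_pair (hanti : ∀ i j, A j i = - A i j) (σ : Perm (Fin (2 * n)))
    (k : Fin n) : pfaffianTerm A (σ * swap (pairFst k) (pairSnd k)) = pfaffianTerm A σ := by
  have other_pairs_fixed : ∀ i ∈ univ.erase k,
      A ((σ * swap (pairFst k) (pairSnd k)) (pairFst i))
        ((σ * swap (pairFst k) (pairSnd k)) (pairSnd i))
        = A (σ (pairFst i)) (σ (pairSnd i)) := by
    intro i hi
    have hik := ne_of_mem_erase hi
    rw [Perm.mul_apply, Perm.mul_apply,
      swap_apply_of_ne_of_ne (pairFst_injective.ne hik) (pairFst_ne_pairSnd _ _),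
      swap_apply_of_ne_of_ne (pairFst_ne_pairSnd _ _).symm (pairSnd_injective.ne hik)]
  simp only [pfaffianTerm]
  rw [← mul_prod_erase univ _ (mem_univ k), ← mul_prod_erase univ _ (mem_univ k),
    prod_congr rfl other_pairs_fixed, map_mul, sign_swap (pairFst_ne_pairSnd k k),
    Perm.mul_apply, Perm.mul_apply, swap_apply_left, swap_apply_right, hanti]
  push_cast
  ring

lemma exists_perm_apply_pairFst_eq (hanti : ∀ i j, A j i = - A i j) (j : Fin n)
    (r : Fin (2 * n)) : ∃ π : Perm (Fin (2 * n)),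
      π (pairFst j) = r ∧ ∀ σ, pfaffianTerm A (σ * π) = pfaffianTerm A σ := by
  let k : Fin n := ⟨r / 2, by omega⟩
  obtain hr | hr : r = pairFst k ∨ r = pairSnd k := by
    simp only [pairFst, pairSnd, Fin.ext_iff, k]
    omega
  · exact ⟨pairSwap j k, by rw [pairSwap_pairFst, swap_apply_left, hr],
      fun σ => pfaffianTerm_mul_pairSwap A σ j k⟩
  · refine ⟨pairSwap j k * swap (pairFst j) (pairSnd j), ?_, fun σ => ?_⟩
    · rw [Perm.mul_apply, swap_apply_left, pairSwap_pairSnd, swap_apply_left, hr]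
    · rw [← mul_assoc, pfaffianTerm_mul_swap_pair A hanti, pfaffianTerm_mul_pairSwap]

lemma sum_pfaffianTerm_eq_mul_sum_fixing (hanti : ∀ i j, A j i = - A i j) (j : Fin n) :
    ∑ σ, pfaffianTerm A σ
      = 2 * n * ∑ σ, if σ (pairFst j) = pairFst j then pfaffianTerm A σ else 0 := by
  set c := pairFst j
  have sum_over_preimage_eq : ∀ r, (∑ σ, if σ r = c then pfaffianTerm A σ else 0)
      = ∑ σ, if σ c = c then pfaffianTerm A σ else 0 := fun r => by
    obtain ⟨π, hπ, hπA⟩ := exists_perm_apply_pairFst_eq A hanti j r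
    rw [← Equiv.sum_comp (Equiv.mulRight π⁻¹)]
    refine sum_congr rfl fun σ _ => ?_
    rw [coe_mulRight, Perm.mul_apply, ← hπ, ← Perm.mul_apply π⁻¹, inv_mul_cancel,
      Perm.one_apply, ← hπA (σ * π⁻¹), inv_mul_cancel_right]
  calc ∑ σ, pfaffianTerm A σ = ∑ σ, ∑ r, if σ r = c then pfaffianTerm A σ else 0 := by
        simp [← Equiv.eq_symm_apply]
    _ = ∑ r, ∑ σ, if σ r = c then pfaffianTerm A σ else 0 := sum_comm
    _ = 2 * n * ∑ σ, if σ c = c then pfaffianTerm A σ else 0 := by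
        simp only [sum_over_preimage_eq, sum_const, Finset.card_univ, Fintype.card_fin,
          nsmul_eq_mul]
        push_cast
        ring

end Symmetry

section PermCons

variable {m : ℕ}

def permCons (p : Fin (m + 1)) (e : Perm (Fin m)) : Perm (Fin (m + 1)) :=
  p.cycleRange.symm * decomposeFin.symm (0, e)

@[simp] lemma permCons_apply_zero (p : Fin (m + 1)) (e : Perm (Fin m)) :
    permCons p e 0 = p := by
  simp [permCons, Perm.mul_apply]

@[simp] lemma permCons_apply_succ (p : Fin (m + 1)) (e : Perm (Fin m)) (j : Fin m) :
    permCons p e j.succ = p.succAbove (e j) := by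
  simp [permCons, Perm.mul_apply]

lemma sign_permCons (p : Fin (m + 1)) (e : Perm (Fin m)) :
    sign (permCons p e) = (-1) ^ (p : ℕ) * sign e := by
  simp [permCons, Fin.sign_cycleRange]

lemma permCons_injective :
    Function.Injective fun pe : Fin (m + 1) × Perm (Fin m) => permCons pe.1 pe.2 := by
  rintro ⟨p, e⟩ ⟨p', e'⟩ h
  obtain rfl : p = p' := by simpa using congrArg (· 0) h
  obtain rfl : e = e' := Equiv.ext fun j => Fin.succAbove_right_injective (p := p) <| by
    simpa using congrArg (· j.succ) h
  rfl

lemma sum_perm_eq_sum_permCons {M : Type*} [AddCommMonoid M]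
    (f : Perm (Fin (m + 1)) → M) : ∑ σ, f σ = ∑ p, ∑ e, f (permCons p e) := by
  have hbij : Function.Bijective fun pe : Fin (m + 1) × Perm (Fin m) => permCons pe.1 pe.2 := by
    rw [Fintype.bijective_iff_injective_and_card]
    exact ⟨permCons_injective, by simp [Fintype.card_perm, Nat.factorial_succ]⟩
  rw [← Fintype.sum_prod_type']
  exact (Fintype.sum_bijective _ hbij _ _ fun _ => rfl).symm

end PermCons

lemma pfaffianTerm_permCons_zero_permCons (A : Matrix (Fin (2 * (n + 1))) (Fin (2 * (n + 1))) R)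
    (q : Fin (2 * n + 1)) (τ : Perm (Fin (2 * n))) :
    pfaffianTerm A (permCons 0 (permCons q τ))
      = (-1) ^ (q : ℕ) * A 0 q.succ
        * pfaffianTerm (A.submatrix (Fin.succ ∘ q.succAbove) (Fin.succ ∘ q.succAbove)) τ := by
  have first_pair : pairFst (0 : Fin (n + 1)) = 0 ∧
      pairSnd (0 : Fin (n + 1)) = (0 : Fin (2 * n + 1)).succ := ⟨rfl, rfl⟩
  have later_pairs : ∀ i : Fin n, pairFst i.succ = (pairFst i).succ.succ ∧
      pairSnd i.succ = (pairSnd i).succ.succ := fun i =>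
    ⟨Fin.ext (by simp [pairFst]; ring), Fin.ext (by simp [pairSnd]; ring)⟩
  simp only [pfaffianTerm, sign_permCons, Fin.prod_univ_succ, first_pair, later_pairs,
    permCons_apply_zero, permCons_apply_succ, Fin.succAbove_zero, Fin.val_zero, pow_zero,
    Matrix.submatrix_apply, Function.comp_apply]
  push_cast
  ring

def natSuccAbove (q j : ℕ) : ℕ := if j < q then j else j + 1

lemma natSuccAbove_of_lt {q j : ℕ} (h : j < q) : natSuccAbove q j = j := if_pos h

lemma natSuccAbove_of_le {q j : ℕ} (h : q ≤ j) : natSuccAbove q j = j + 1 := if_neg (by omega)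

lemma natSuccAbove_zero (j : ℕ) : natSuccAbove 0 j = j + 1 := natSuccAbove_of_le j.zero_le

lemma natSuccAbove_add_two (q j : ℕ) :
    natSuccAbove (q + 2) (j + 2) = natSuccAbove q j + 2 := by
  simp only [natSuccAbove, add_lt_add_iff_right]
  split_ifs <;> rfl

lemma val_succAbove {m : ℕ} (p : Fin (m + 1)) (i : Fin m) :
    (p.succAbove i : ℕ) = natSuccAbove p i := by
  simp only [Fin.succAbove, natSuccAbove, Fin.lt_def, Fin.val_castSucc]
  split_ifs <;> rfl

/-- With the minors already evaluated, this is the first-row expansion of the Pfaffian of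
`(a_i b_j)_{i<j}` on the indices `0, …, 2n+1`, divided by `a₀` and with `u = a (· + 1)`,
`w = b (· + 1)`. -/
lemma kernel_row_expansion (n : ℕ) (u w : ℕ → R) :
    ∑ q ∈ range (2 * n + 1), (-1) ^ q * w q *
        ∏ i ∈ range n, u (natSuccAbove q (2 * i)) * w (natSuccAbove q (2 * i + 1))
      = w 0 * ∏ i ∈ range n, u (2 * i + 1) * w (2 * i + 2) := by
  induction n generalizing u w with
  | zero => simp
  | succ n ih =>
    set tail := ∏ i ∈ range n, u (2 * i + 3) * w (2 * i + 4)
    -- deleting an index `q + 2 ≥ 2` leaves the first pair `(0, 1)` in place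
    have shifted : ∀ q, (-1) ^ (q + 2) * w (q + 2) * ∏ i ∈ range (n + 1),
        u (natSuccAbove (q + 2) (2 * i)) * w (natSuccAbove (q + 2) (2 * i + 1))
        = u 0 * w 1 * ((-1) ^ q * w (q + 2) * ∏ i ∈ range n,
          u (natSuccAbove q (2 * i) + 2) * w (natSuccAbove q (2 * i + 1) + 2)) := by
      intro q
      simp only [prod_range_succ', mul_add, ← natSuccAbove_add_two, pow_add,
        natSuccAbove_of_lt (show 0 < q + 2 by omega), natSuccAbove_of_lt (show 1 < q + 2 by omega)]
      ring
    have shifted_sum : ∑ q ∈ range (2 * n + 1), (-1) ^ q * w (q + 2) * ∏ i ∈ range n,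
        u (natSuccAbove q (2 * i) + 2) * w (natSuccAbove q (2 * i + 1) + 2) = w 2 * tail :=
      ih (fun k => u (k + 2)) (fun k => w (k + 2))
    have delete_one : ∏ i ∈ range (n + 1),
        u (natSuccAbove 1 (2 * i)) * w (natSuccAbove 1 (2 * i + 1)) = u 0 * w 2 * tail := by
      rw [prod_range_succ', mul_comm]
      rfl
    have delete_none :
        ∏ i ∈ range (n + 1), u (2 * i + 1) * w (2 * i + 2) = u 1 * w 2 * tail := by
      rw [prod_range_succ', mul_comm]
      rfl
    rw [show 2 * (n + 1) + 1 = 2 * n + 1 + 1 + 1 by ring, sum_range_succ', sum_range_succ']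
    simp only [shifted, ← mul_sum, shifted_sum, delete_one, natSuccAbove_zero, delete_none]
    ring

theorem sum_pfaffianTerm_of_kernel (a b : ℕ → R) (A : Matrix (Fin (2 * n)) (Fin (2 * n)) R)
    (hanti : ∀ i j, A j i = - A i j) (hA : ∀ i j : Fin (2 * n), i < j → A i j = a i * b j) :
    ∑ σ, pfaffianTerm A σ = 2 ^ n * n ! * ∏ i ∈ range n, a (2 * i) * b (2 * i + 1) := by
  induction n generalizing a b with
  | zero => simp [pfaffianTerm]
  | succ n ih =>
    have minor_sum : ∀ q : Fin (2 * n + 1),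
        ∑ τ, pfaffianTerm (A.submatrix (Fin.succ ∘ q.succAbove) (Fin.succ ∘ q.succAbove)) τ
          = 2 ^ n * n ! * ∏ i ∈ range n,
            a (natSuccAbove q (2 * i) + 1) * b (natSuccAbove q (2 * i + 1) + 1) := fun q =>
      ih (fun k => a (natSuccAbove q k + 1)) (fun k => b (natSuccAbove q k + 1)) _
        (fun i j => hanti _ _) fun i j hij => by
          simp only [Matrix.submatrix_apply, Function.comp_apply,
            hA _ _ (Fin.succ_lt_succ_iff.2 (Fin.strictMono_succAbove q hij)), Fin.val_succ,
            val_succAbove]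
    calc ∑ σ, pfaffianTerm A σ
        = 2 * (n + 1 : ℕ) * ∑ σ, if σ 0 = 0 then pfaffianTerm A σ else 0 :=
          sum_pfaffianTerm_eq_mul_sum_fixing A hanti 0
      _ = 2 * (n + 1 : ℕ) * ∑ q : Fin (2 * n + 1), ∑ τ,
            pfaffianTerm A (permCons (m := 2 * n + 1) 0 (permCons q τ)) := by
          congr 1
          refine (sum_perm_eq_sum_permCons (m := 2 * n + 1) _).trans ?_
          rw [Fintype.sum_eq_single 0 fun p hp => by simp [hp]]
          simp only [permCons_apply_zero, if_true]
          exact sum_perm_eq_sum_permCons _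
      _ = 2 * (n + 1 : ℕ) * ∑ q : Fin (2 * n + 1), (-1) ^ (q : ℕ) * (a 0 * b (q + 1))
            * (2 ^ n * n ! * ∏ i ∈ range n,
              a (natSuccAbove q (2 * i) + 1) * b (natSuccAbove q (2 * i + 1) + 1)) := by
          simp only [pfaffianTerm_permCons_zero_permCons, ← mul_sum]
          congr 1
          refine sum_congr rfl fun q _ => ?_
          rw [minor_sum q, hA _ _ (Fin.succ_pos q), Fin.val_succ, Fin.val_zero]
      _ = 2 * (n + 1 : ℕ) * (2 ^ n * n !) * a 0 * ∑ q ∈ range (2 * n + 1),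
            (-1) ^ q * b (q + 1) * ∏ i ∈ range n,
              a (natSuccAbove q (2 * i) + 1) * b (natSuccAbove q (2 * i + 1) + 1) := by
          rw [Fin.sum_univ_eq_sum_range (fun q => (-1) ^ q * (a 0 * b (q + 1)) * (2 ^ n * n ! *
            ∏ i ∈ range n,
              a (natSuccAbove q (2 * i) + 1) * b (natSuccAbove q (2 * i + 1) + 1))),
            mul_sum, mul_sum]
          exact sum_congr rfl fun q _ => by ring
      _ = 2 * (n + 1 : ℕ) * (2 ^ n * n !) * a 0
            * (b 1 * ∏ i ∈ range n, a (2 * (i + 1)) * b (2 * (i + 1) + 1)) := by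
          rw [kernel_row_expansion n (fun k => a (k + 1)) (fun k => b (k + 1))]
          rfl
      _ = 2 ^ (n + 1) * (n + 1)! * ∏ i ∈ range (n + 1), a (2 * i) * b (2 * i + 1) := by
          rw [prod_range_succ', Nat.factorial_succ]
          push_cast
          ring

end Pfaffian

/-- if `A` is the `2n × 2n` antisymmetric matrix with entries
`A i j = g(x i) * h(x j)` for `i < j`, where `x_1 < ⋯ < x_{2n}`, then
`pf(A) = ∏_{i=1}^n g(x_{2i-1}) h(x_{2i})`. -/
theorem pfaffian_of_alternating_product_kernel (n : ℕ) (x : Fin (2*n) → ℝ)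
    (g h : ℝ → ℝ) (A : Matrix (Fin (2*n)) (Fin (2*n)) ℝ)
    (hanti : ∀ i j, A j i = - A i j)
    (hA : ∀ i j : Fin (2*n), i < j → A i j = g (x i) * h (x j)) :
    pfaffian A
      = ∏ i : Fin n,
          g (x ⟨2*(i:ℕ), by have := i.isLt; omega⟩)
            * h (x ⟨2*(i:ℕ)+1, by have := i.isLt; omega⟩) := by
  let a : ℕ → ℝ := fun k => if hk : k < 2 * n then g (x ⟨k, hk⟩) else 0
  let b : ℕ → ℝ := fun k => if hk : k < 2 * n then h (x ⟨k, hk⟩) else 0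
  have hab : ∀ i j : Fin (2 * n), i < j → A i j = a i * b j := fun i j hij => by
    simp [a, b, hA i j hij]
  rw [Pfaffian.pfaffian_eq_inv_mul_sum, Pfaffian.sum_pfaffianTerm_of_kernel a b A hanti hab,
    inv_mul_cancel_left₀ (by positivity), ← Fin.prod_univ_eq_prod_range]
  refine prod_congr rfl fun i _ => ?_
  simp only [a, b, dif_pos (show 2 * (i : ℕ) < 2 * n by omega),
    dif_pos (show 2 * (i : ℕ) + 1 < 2 * n by omega)]
end

section
/- Let (S_n)_{n≥0} be a random walk started at 0 whose i.i.d. increments have a symmetric probability density ρ on ℝ, and let τ_{0+} = inf{n ≥ 1 : S_n > 0}. Then for every β ∈ [0,1], the expectation E[β^{τ_{0+}}] equals 1 − √(1−β). (Sparre Andersen's formula.) -/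
/-!
Let `q m` be the probability that the walk stays `≤ 0` at times `1, …, m`. Split the path
`S_0, …, S_n` at the first time `k` at which it attains its minimum: read backwards, the part
before `k` is a walk staying `< 0` up to time `k`, and the part after `k` is a walk staying `≥ 0`
up to time `n - k`. The two parts are independent and, as the increments have no atoms and a
symmetric law, they have probabilities `q k` and `q (n - k)`. Hence `∑_{k ≤ n} q k q (n - k) = 1`,
so the generating function `Q β = ∑ q n β ^ n` satisfies `Q β ^ 2 = (1 - β)⁻¹`. Since
`P(τ = k + 1) = q k - q (k + 1)`, this gives `E[β ^ τ] = 1 - (1 - β) Q β = 1 - √(1 - β)`; at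
`β = 1` one uses instead that `(n + 1) q n ^ 2 ≤ 1`, so that `q n → 0`.
-/

open Classical
open MeasureTheory ProbabilityTheory
open Filter Finset Topology

section ConvolutionSquareOne

variable {q : ℕ → ℝ}

theorem sq_mul_succ_le_one_of_sum_mul_eq_one (hq : Antitone q) (hq_nonneg : ∀ n, 0 ≤ q n)
    (hconv : ∀ n, ∑ k ∈ range (n + 1), q k * q (n - k) = 1) (n : ℕ) :
    q n ^ 2 * (n + 1) ≤ 1 := by
  calc q n ^ 2 * (n + 1) = ∑ k ∈ range (n + 1), q n * q n := by simp [sq, mul_comm]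
    _ ≤ ∑ k ∈ range (n + 1), q k * q (n - k) := by
        refine sum_le_sum fun k hk ↦
          mul_le_mul (hq ?_) (hq (Nat.sub_le n k)) (hq_nonneg n) (hq_nonneg k)
        simpa [Nat.lt_succ_iff] using hk
    _ = 1 := hconv n

theorem tendsto_zero_of_sum_mul_eq_one (hq : Antitone q) (hq_nonneg : ∀ n, 0 ≤ q n)
    (hconv : ∀ n, ∑ k ∈ range (n + 1), q k * q (n - k) = 1) :
    Tendsto q atTop (𝓝 0) := by
  have hsq : Tendsto (fun n ↦ q n ^ 2) atTop (𝓝 0) := by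
    refine squeeze_zero (fun n ↦ sq_nonneg _) (fun n ↦ ?_)
      (tendsto_one_div_add_atTop_nhds_zero_nat)
    rw [le_div_iff₀ (by positivity)]
    exact sq_mul_succ_le_one_of_sum_mul_eq_one hq hq_nonneg hconv n
  simpa [Real.sqrt_sq (hq_nonneg _)] using hsq.sqrt

theorem hasSum_mul_pow_of_sum_mul_eq_one (hq : Antitone q) (hq_nonneg : ∀ n, 0 ≤ q n)
    (hconv : ∀ n, ∑ k ∈ range (n + 1), q k * q (n - k) = 1) {β : ℝ} (hβ0 : 0 ≤ β) (hβ1 : β < 1) :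
    HasSum (fun n ↦ q n * β ^ n) (√(1 - β))⁻¹ := by
  have hterm : ∀ n, 0 ≤ q n * β ^ n := fun n ↦ mul_nonneg (hq_nonneg n) (pow_nonneg hβ0 n)
  have hsum : Summable fun n ↦ q n * β ^ n :=
    (summable_geometric_of_lt_one hβ0 hβ1).mul_left (q 0) |>.of_nonneg_of_le hterm
      fun n ↦ mul_le_mul_of_nonneg_right (hq (Nat.zero_le n)) (pow_nonneg hβ0 n)
  have hnorm : Summable fun n ↦ ‖q n * β ^ n‖ := by
    simpa only [Real.norm_of_nonneg (hterm _)] using hsum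
  have hsq : (∑' n, q n * β ^ n) * ∑' n, q n * β ^ n = (1 - β)⁻¹ := by
    rw [tsum_mul_tsum_eq_tsum_sum_range_of_summable_norm hnorm hnorm,
      ← tsum_geometric_of_lt_one hβ0 hβ1]
    refine tsum_congr fun n ↦ ?_
    calc ∑ k ∈ range (n + 1), q k * β ^ k * (q (n - k) * β ^ (n - k))
        = ∑ k ∈ range (n + 1), q k * q (n - k) * β ^ n := by
          refine sum_congr rfl fun k hk ↦ ?_
          rw [← pow_mul_pow_sub β (show k ≤ n by simpa [Nat.lt_succ_iff] using hk)]
          ring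
      _ = β ^ n := by rw [← sum_mul, hconv, one_mul]
  convert hsum.hasSum using 1
  rw [← Real.sqrt_inv, ← hsq, Real.sqrt_mul_self (tsum_nonneg hterm)]

theorem hasSum_pow_succ_mul_sub_of_sum_mul_eq_one (hq : Antitone q) (hq_nonneg : ∀ n, 0 ≤ q n)
    (hconv : ∀ n, ∑ k ∈ range (n + 1), q k * q (n - k) = 1) {β : ℝ} (hβ : β ∈ Set.Icc 0 1) :
    HasSum (fun k ↦ β ^ (k + 1) * (q k - q (k + 1))) (1 - √(1 - β)) := by
  have hq_zero : q 0 = 1 := by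
    have h := hconv 0
    simp only [zero_add, range_one, sum_singleton, Nat.sub_zero] at h
    nlinarith [hq_nonneg 0]
  obtain ⟨hβ0, hβ1 | rfl⟩ := And.imp_right lt_or_eq_of_le hβ
  · have hgen := hasSum_mul_pow_of_sum_mul_eq_one hq hq_nonneg hconv hβ0 hβ1
    have hshift := (hasSum_nat_add_iff' 1).2 hgen
    have hval : β * (√(1 - β))⁻¹ - ((√(1 - β))⁻¹ - ∑ i ∈ range 1, q i * β ^ i)
        = 1 - √(1 - β) := by
      rw [sum_range_one, pow_zero, mul_one, hq_zero]
      have hpos : 0 < 1 - β := sub_pos.2 hβ1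
      have : √(1 - β) ≠ 0 := (Real.sqrt_pos.2 hpos).ne'
      field_simp
      linear_combination Real.sq_sqrt hpos.le
    rw [← hval]
    exact ((hgen.mul_left β).sub hshift).congr_fun fun k ↦ by ring
  · rw [sub_self, Real.sqrt_zero, sub_zero]
    simp only [one_pow, one_mul]
    refine (hasSum_iff_tendsto_nat_of_nonneg (fun k ↦ sub_nonneg.2 (hq k.le_succ)) 1).2 ?_
    simp_rw [sum_range_sub']
    simpa [hq_zero] using (tendsto_zero_of_sum_mul_eq_one hq hq_nonneg hconv).const_sub (q 0)

end ConvolutionSquareOne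

section Walk

def walkStaysIn (s : Set ℝ) (m : ℕ) : Set (ℕ → ℝ) :=
  {x | ∀ j ∈ Icc 1 m, ∑ i ∈ range j, x i ∈ s}

variable {s : Set ℝ}

theorem measurableSet_walkStaysIn (hs : MeasurableSet s) (m : ℕ) :
    MeasurableSet (walkStaysIn s m) := by
  simp only [walkStaysIn, Set.ofPred_forall]
  exact .biInter (Set.to_countable _) fun j _ ↦
    hs.preimage (Finset.measurable_sum _ fun i _ ↦ measurable_pi_apply i)

theorem walkStaysIn_antitone : Antitone (walkStaysIn s) :=
  fun _ _ h _ hx j hj ↦ hx j (Icc_subset_Icc_right h hj)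

theorem neg_mem_walkStaysIn_iff {m : ℕ} {x : ℕ → ℝ} :
    -x ∈ walkStaysIn s m ↔ x ∈ walkStaysIn (-s) m := by
  simp [walkStaysIn, sum_neg_distrib]

/-- `Polynomial.revAt (k - 1)` reverses the indices `0, …, k - 1` and fixes the others. -/
theorem revAt_mem_walkStaysIn_iff {k : ℕ} {x : ℕ → ℝ} :
    (fun i ↦ x (Polynomial.revAt (k - 1) i)) ∈ walkStaysIn s k ↔
      ∀ j < k, ∑ i ∈ Ico j k, x i ∈ s := by
  have hsum : ∀ j ∈ Icc 1 k, ∑ i ∈ range j, x (Polynomial.revAt (k - 1) i)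
      = ∑ i ∈ Ico (k - j) k, x i := by
    intro j hj
    obtain ⟨hj1, hjk⟩ := mem_Icc.1 hj
    rw [range_eq_Ico, sum_congr rfl fun i hi ↦ by
        rw [Polynomial.revAt_le (by simp at hi; omega)],
      sum_Ico_reflect _ _ (by omega), Nat.sub_add_cancel (by omega), Nat.sub_zero]
  simp only [walkStaysIn, Set.mem_ofPred_eq]
  constructor
  · intro h j hj
    have hkj : k - j ∈ Icc 1 k := mem_Icc.2 ⟨by omega, by omega⟩
    have := h (k - j) hkj
    rwa [hsum _ hkj, Nat.sub_sub_self hj.le] at this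
  · intro h j hj
    rw [hsum j hj]
    exact h _ (by simp at hj; omega)

theorem shift_mem_walkStaysIn_iff {k m : ℕ} {x : ℕ → ℝ} :
    (fun i ↦ x (k + i)) ∈ walkStaysIn s m ↔ ∀ j ∈ Ioc k (k + m), ∑ i ∈ Ico k j, x i ∈ s := by
  simp only [walkStaysIn, Set.mem_ofPred_eq]
  constructor
  · intro h j hj
    obtain ⟨hkj, hjm⟩ := mem_Ioc.1 hj
    simpa [sum_Ico_eq_sum_range] using h (j - k) (mem_Icc.2 ⟨by omega, by omega⟩)
  · intro h j hj
    obtain ⟨hj1, hjm⟩ := mem_Icc.1 hj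
    simpa [sum_Ico_eq_sum_range] using h (k + j) (mem_Ioc.2 ⟨by omega, by omega⟩)

def IsFirstMinUpTo (a : ℕ → ℝ) (n k : ℕ) : Prop :=
  k ≤ n ∧ (∀ j < k, a k < a j) ∧ ∀ j ∈ Ioc k n, a k ≤ a j

theorem existsUnique_isFirstMinUpTo (a : ℕ → ℝ) (n : ℕ) : ∃! k, IsFirstMinUpTo a n k := by
  have hmin : ∃ k, k ≤ n ∧ ∀ j ≤ n, a k ≤ a j := by
    obtain ⟨k, hk, hmin⟩ := exists_min_image (range (n + 1)) a nonempty_range_add_one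
    exact ⟨k, Nat.lt_succ_iff.1 (mem_range.1 hk), fun j hj ↦ hmin j (mem_range.2 (by omega))⟩
  refine ⟨Nat.find hmin, ⟨(Nat.find_spec hmin).1, fun j hj ↦ ?_, fun j hj ↦
    (Nat.find_spec hmin).2 j (mem_Ioc.1 hj).2⟩, ?_⟩
  · have := Nat.find_min hmin hj
    simp only [not_and, not_forall, not_le] at this
    obtain ⟨i, hi, hlt⟩ := this (by have := (Nat.find_spec hmin).1; omega)
    exact ((Nat.find_spec hmin).2 i hi).trans_lt hlt
  · rintro k ⟨hkn, hbefore, hafter⟩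
    have hk : ∀ j ≤ n, a k ≤ a j := fun j hj ↦ by
      rcases lt_trichotomy j k with h | rfl | h
      exacts [(hbefore j h).le, le_rfl, hafter j (mem_Ioc.2 ⟨h, hj⟩)]
    refine le_antisymm ?_ (Nat.find_le ⟨hkn, hk⟩)
    by_contra! hlt
    exact (hbefore _ hlt).not_ge ((Nat.find_spec hmin).2 k hkn)

theorem isFirstMinUpTo_partialSums_iff {x : ℕ → ℝ} {n k : ℕ} :
    IsFirstMinUpTo (fun j ↦ ∑ i ∈ range j, x i) n k ↔
      k ≤ n ∧ (∀ j < k, ∑ i ∈ Ico j k, x i < 0) ∧ ∀ j ∈ Ioc k n, 0 ≤ ∑ i ∈ Ico k j, x i := by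
  unfold IsFirstMinUpTo
  refine and_congr_right fun _ ↦ and_congr (forall₂_congr fun j hj ↦ ?_)
    (forall₂_congr fun j hj ↦ ?_)
  · rw [sum_Ico_eq_sub _ hj.le, sub_neg]
  · rw [sum_Ico_eq_sub _ (mem_Ioc.1 hj).1.le, sub_nonneg]

end Walk

section Independence

variable {Ω : Type*} [MeasurableSpace Ω] {μ : Measure Ω}

theorem identDistrib_of_iIndepFun {ι E : Type*} [MeasurableSpace E] {X Y : ι → Ω → E}
    (hX : ∀ i, Measurable (X i)) (hY : ∀ i, Measurable (Y i)) (hXi : iIndepFun X μ)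
    (hYi : iIndepFun Y μ) (hXY : ∀ i, μ.map (X i) = μ.map (Y i)) :
    IdentDistrib (fun ω i ↦ X i ω) (fun ω i ↦ Y i ω) μ μ where
  aemeasurable_fst := (measurable_pi_lambda _ hX).aemeasurable
  aemeasurable_snd := (measurable_pi_lambda _ hY).aemeasurable
  map_eq := by
    rw [hXi.map_fun_eq_infinitePi_map hX, hYi.map_fun_eq_infinitePi_map hY, funext hXY]

theorem iIndepFun.indepFun_sums_of_disjoint {E : Type*} [MeasurableSpace E] [AddCommMonoid E]
    [MeasurableAdd₂ E] {X : ℕ → Ω → E} (hX : ∀ n, Measurable (X n)) (hindep : iIndepFun X μ)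
    {S T : Set ℕ} (hST : Disjoint S T) {F G : ℕ → Finset ℕ} (hF : ∀ j, ↑(F j) ⊆ S)
    (hG : ∀ j, ↑(G j) ⊆ T) :
    IndepFun (fun ω j ↦ ∑ i ∈ F j, X i ω) (fun ω j ↦ ∑ i ∈ G j, X i ω) μ := by
  have hblock : ∀ {U : Set ℕ} {H : ℕ → Finset ℕ}, (∀ j, ↑(H j) ⊆ U) →
      Measurable[⨆ i ∈ U, MeasurableSpace.comap (X i) inferInstance]
        (fun ω j ↦ ∑ i ∈ H j, X i ω) := fun {U H} hH ↦
    (@measurable_pi_iff Ω ℕ (fun _ ↦ E) (⨆ i ∈ U, _) _ _).2 fun j ↦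
      Finset.measurable_sum _ fun i hi ↦
      Measurable.of_comap_le (le_iSup₂ (f := fun i _ ↦ MeasurableSpace.comap (X i) _) i (hH j hi))
  rw [IndepFun_iff_Indep]
  exact indep_of_indep_of_le_right (indep_of_indep_of_le_left
    (indep_iSup_of_disjoint (fun i ↦ (hX i).comap_le) hindep hST) (hblock hF).comap_le)
    (hblock hG).comap_le

theorem IndepFun.measure_add_eq_zero [IsFiniteMeasure μ] {Y Z : Ω → ℝ} (h : IndepFun Y Z μ)
    (hY : Measurable Y) (hZ : Measurable Z) [NullSingletonClass (μ.map Z)] :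
    μ {ω | Y ω + Z ω = 0} = 0 := by
  have hD : MeasurableSet {p : ℝ × ℝ | p.1 + p.2 = 0} :=
    measurableSet_eq_fun (measurable_fst.add measurable_snd) measurable_const
  have hslice : ∀ y : ℝ, (fun z ↦ (y, z)) ⁻¹' {p : ℝ × ℝ | p.1 + p.2 = 0} = {-y} := fun y ↦ by
    ext z; simp [eq_neg_iff_add_eq_zero, add_comm]
  rw [← Set.preimage_ofPred_eq (f := fun ω ↦ (Y ω, Z ω)) (p := fun p : ℝ × ℝ ↦ p.1 + p.2 = 0),
    ← Measure.map_apply (hY.prodMk hZ) hD,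
    (indepFun_iff_map_prod_eq_prod_map_map hY.aemeasurable hZ.aemeasurable).1 h,
    Measure.prod_apply hD]
  simp [hslice]

end Independence

theorem isNegInvariant_withDensity {G : Type*} [MeasurableSpace G] [InvolutiveNeg G]
    [MeasurableNeg G] {μ : Measure G} [μ.IsNegInvariant] {f : G → ENNReal}
    (hf : ∀ x, f (-x) = f x) : (μ.withDensity f).IsNegInvariant where
  neg_eq_self := by
    ext s hs
    rw [Measure.neg_def, Measure.map_apply measurable_neg hs,
      withDensity_apply _ (measurable_neg hs), withDensity_apply _ hs]
    simpa only [hf] using (Measure.measurePreserving_neg μ).setLIntegral_comp_preimage_emb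
      (MeasurableEquiv.neg G).measurableEmbedding f s

section RandomWalk

variable {Ω : Type*} [MeasurableSpace Ω] {μ : Measure Ω} {ν : Measure ℝ} {X : ℕ → Ω → ℝ}

theorem measure_walkStaysIn_Iio_eq_Iic [IsFiniteMeasure μ] [NullSingletonClass ν]
    (hX : ∀ n, Measurable (X n)) (hindep : iIndepFun X μ) (hlaw : ∀ n, μ.map (X n) = ν) (m : ℕ) :
    μ ((fun ω i ↦ X i ω) ⁻¹' walkStaysIn (Set.Iio 0) m) =
      μ ((fun ω i ↦ X i ω) ⁻¹' walkStaysIn (Set.Iic 0) m) := by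
  have hne : ∀ᵐ ω ∂μ, ∀ j ∈ Icc 1 m, ∑ i ∈ range j, X i ω ≠ 0 := by
    refine (Finset.eventually_all _).2 fun j hj ↦ ?_
    obtain ⟨j, rfl⟩ : ∃ i, j = i + 1 := ⟨j - 1, by simp at hj; omega⟩
    have : NullSingletonClass (μ.map (X j)) := hlaw j ▸ inferInstance
    have h := IndepFun.measure_add_eq_zero
      (hindep.indepFun_finsetSum_of_notMem hX notMem_range_self)
      (by simpa only [← Finset.sum_apply] using Finset.measurable_sum _ fun i _ ↦ hX i) (hX j)
    simpa [sum_range_succ] using measure_eq_zero_iff_ae_notMem.1 h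
  refine measure_congr (eventuallyEq_set.2 ?_)
  filter_upwards [hne] with ω hω
  exact forall₂_congr fun j hj ↦ lt_iff_le_and_ne.trans (and_iff_left (hω j hj))

theorem measure_forall_sum_Ico_neg_eq [IsFiniteMeasure μ] [NullSingletonClass ν]
    (hX : ∀ n, Measurable (X n)) (hindep : iIndepFun X μ) (hlaw : ∀ n, μ.map (X n) = ν) (k : ℕ) :
    μ {ω | ∀ j < k, ∑ i ∈ Ico j k, X i ω < 0} =
      μ ((fun ω i ↦ X i ω) ⁻¹' walkStaysIn (Set.Iic 0) k) := by
  set σ := Polynomial.revAt (k - 1)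
  have hrev : {ω | ∀ j < k, ∑ i ∈ Ico j k, X i ω < 0} =
      (fun ω i ↦ X (σ i) ω) ⁻¹' walkStaysIn (Set.Iio 0) k := by
    ext ω
    exact (revAt_mem_walkStaysIn_iff (s := Set.Iio 0) (k := k) (x := fun i ↦ X i ω)).symm
  rw [hrev, ← measure_walkStaysIn_Iio_eq_Iic hX hindep hlaw,
    (identDistrib_of_iIndepFun (fun i ↦ hX (σ i)) hX (hindep.precomp σ.injective) hindep
      fun i ↦ by rw [hlaw, hlaw]).measure_mem_eq (measurableSet_walkStaysIn measurableSet_Iio k)]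

theorem measure_forall_sum_Ico_nonneg_eq [ν.IsNegInvariant] (hX : ∀ n, Measurable (X n))
    (hindep : iIndepFun X μ) (hlaw : ∀ n, μ.map (X n) = ν) (k m : ℕ) :
    μ {ω | ∀ j ∈ Ioc k (k + m), 0 ≤ ∑ i ∈ Ico k j, X i ω} =
      μ ((fun ω i ↦ X i ω) ⁻¹' walkStaysIn (Set.Iic 0) m) := by
  have hshift : {ω | ∀ j ∈ Ioc k (k + m), 0 ≤ ∑ i ∈ Ico k j, X i ω} =
      (fun ω i ↦ X (k + i) ω) ⁻¹' walkStaysIn (Set.Ici 0) m := by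
    ext ω
    exact (shift_mem_walkStaysIn_iff (s := Set.Ici 0) (x := fun i ↦ X i ω)).symm
  have hneg : (fun ω i ↦ (-X i) ω) ⁻¹' walkStaysIn (Set.Ici 0) m =
      (fun ω i ↦ X i ω) ⁻¹' walkStaysIn (Set.Iic 0) m := by
    ext ω
    have h := neg_mem_walkStaysIn_iff (s := Set.Ici 0) (m := m) (x := fun i ↦ X i ω)
    rwa [Set.neg_Ici, neg_zero] at h
  have hlaw_neg : ∀ i, μ.map (-X i) = ν := fun i ↦ by
    rw [show -X i = Neg.neg ∘ X i from rfl, ← Measure.map_map measurable_neg (hX i), hlaw,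
      Measure.map_neg_eq_self]
  rw [hshift, ← hneg,
    (identDistrib_of_iIndepFun (fun i ↦ hX (k + i)) (fun i ↦ (hX i).neg)
      (hindep.precomp (add_right_injective k)) (hindep.comp _ fun _ ↦ measurable_neg)
      fun i ↦ by rw [hlaw, hlaw_neg]).measure_mem_eq
      (measurableSet_walkStaysIn measurableSet_Ici m)]

end RandomWalk

section FirstMinimum

variable {Ω : Type*} [MeasurableSpace Ω] {μ : Measure Ω} {ν : Measure ℝ} {X : ℕ → Ω → ℝ}

theorem measurableSet_isFirstMinUpTo (n k : ℕ) :
    MeasurableSet {a : ℕ → ℝ | IsFirstMinUpTo a n k} := by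
  unfold IsFirstMinUpTo
  measurability

theorem measure_isFirstMinUpTo_eq_mul [IsFiniteMeasure μ] [NullSingletonClass ν] [ν.IsNegInvariant]
    (hX : ∀ n, Measurable (X n)) (hindep : iIndepFun X μ) (hlaw : ∀ n, μ.map (X n) = ν)
    {n k : ℕ} (hk : k ≤ n) :
    μ {ω | IsFirstMinUpTo (fun j ↦ ∑ i ∈ range j, X i ω) n k} =
      μ ((fun ω i ↦ X i ω) ⁻¹' walkStaysIn (Set.Iic 0) k) *
        μ ((fun ω i ↦ X i ω) ⁻¹' walkStaysIn (Set.Iic 0) (n - k)) := by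
  have hblocks := iIndepFun.indepFun_sums_of_disjoint hX hindep (Set.Iio_disjoint_Ici le_rfl)
    (F := fun j ↦ Ico j k) (G := fun j ↦ Ico k j)
    (fun j i hi ↦ (mem_Ico.1 hi).2) (fun j i hi ↦ (mem_Ico.1 hi).1)
  have hevent : {ω | IsFirstMinUpTo (fun j ↦ ∑ i ∈ range j, X i ω) n k} =
      (fun ω j ↦ ∑ i ∈ Ico j k, X i ω) ⁻¹' {y | ∀ j < k, y j < 0} ∩
        (fun ω j ↦ ∑ i ∈ Ico k j, X i ω) ⁻¹' {y | ∀ j ∈ Ioc k n, 0 ≤ y j} := by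
    ext ω
    simp [isFirstMinUpTo_partialSums_iff, hk]
  rw [hevent, hblocks.measure_inter_preimage_eq_mul _ _ (by measurability) (by measurability)]
  congr 1
  · exact measure_forall_sum_Ico_neg_eq hX hindep hlaw k
  · simpa [Nat.add_sub_cancel' hk] using measure_forall_sum_Ico_nonneg_eq hX hindep hlaw k (n - k)

theorem sum_measureReal_walkStaysIn_mul_eq_one [IsProbabilityMeasure μ] [NullSingletonClass ν]
    [ν.IsNegInvariant] (hX : ∀ n, Measurable (X n)) (hindep : iIndepFun X μ)
    (hlaw : ∀ n, μ.map (X n) = ν) (n : ℕ) :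
    ∑ k ∈ range (n + 1), μ.real ((fun ω i ↦ X i ω) ⁻¹' walkStaysIn (Set.Iic 0) k) *
      μ.real ((fun ω i ↦ X i ω) ⁻¹' walkStaysIn (Set.Iic 0) (n - k)) = 1 := by
  set E : ℕ → Set Ω := fun k ↦ {ω | IsFirstMinUpTo (fun j ↦ ∑ i ∈ range j, X i ω) n k}
  have hE : ∀ k, MeasurableSet (E k) := fun k ↦
    measurable_pi_lambda _ (fun j ↦ Finset.measurable_sum _ fun i _ ↦ hX i)
      (measurableSet_isFirstMinUpTo n k)
  have hcover : ⋃ k ∈ range (n + 1), E k = Set.univ := by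
    refine Set.eq_univ_of_forall fun ω ↦ ?_
    obtain ⟨k, hk, -⟩ := existsUnique_isFirstMinUpTo (fun j ↦ ∑ i ∈ range j, X i ω) n
    exact Set.mem_biUnion (mem_range.2 (Nat.lt_succ_of_le hk.1)) hk
  have hdisj : (range (n + 1) : Set ℕ).PairwiseDisjoint E := fun k _ l _ hkl ↦
    Set.disjoint_left.2 fun ω hk hl ↦
      hkl ((existsUnique_isFirstMinUpTo (fun j ↦ ∑ i ∈ range j, X i ω) n).unique hk hl)
  rw [← probReal_univ (μ := μ), ← hcover, measureReal_biUnion_finset hdisj fun k _ ↦ hE k]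
  refine sum_congr rfl fun k hk ↦ ?_
  simp only [E, measureReal_def, ENNReal.toReal_mul,
    measure_isFirstMinUpTo_eq_mul hX hindep hlaw (Nat.lt_succ_iff.1 (mem_range.1 hk))]

end FirstMinimum

section HittingTime

theorem mem_walkStaysIn_Iic_iff_lt_sInf {x : ℕ → ℝ} (h : ∃ n, 1 ≤ n ∧ 0 < ∑ i ∈ range n, x i)
    (k : ℕ) :
    x ∈ walkStaysIn (Set.Iic 0) k ↔ k < sInf {n | 1 ≤ n ∧ 0 < ∑ i ∈ range n, x i} := by
  have hmem := Nat.sInf_mem h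
  simp only [walkStaysIn, Set.mem_ofPred_eq, mem_Icc, Set.mem_Iic]
  constructor
  · intro hk
    by_contra! hle
    exact (hk _ ⟨hmem.1, hle⟩).not_gt hmem.2
  · intro hk j hj
    by_contra! hpos
    exact Nat.notMem_of_lt_sInf (s := {n | 1 ≤ n ∧ 0 < ∑ i ∈ range n, x i}) (by omega)
      ⟨hj.1, hpos⟩

theorem ite_exists_pos_pow_sInf_eq_tsum (x : ℕ → ℝ) (β : ℝ) :
    (if ∃ n, 1 ≤ n ∧ 0 < ∑ i ∈ range n, x i
      then β ^ sInf {n | 1 ≤ n ∧ 0 < ∑ i ∈ range n, x i} else 0) =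
      ∑' k, (walkStaysIn (Set.Iic 0) k \ walkStaysIn (Set.Iic 0) (k + 1)).indicator
        (fun _ ↦ β ^ (k + 1)) x := by
  split_ifs with h
  · set τ := sInf {n | 1 ≤ n ∧ 0 < ∑ i ∈ range n, x i}
    have hτ : 1 ≤ τ := (Nat.sInf_mem h).1
    rw [tsum_eq_single (τ - 1) fun k hk ↦
      Set.indicator_of_notMem (by simp [mem_walkStaysIn_Iic_iff_lt_sInf h]; omega) _,
      Set.indicator_of_mem (by simp [mem_walkStaysIn_Iic_iff_lt_sInf h]; omega),
      Nat.sub_add_cancel hτ]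
  · push Not at h
    have hstays : ∀ k, x ∈ walkStaysIn (Set.Iic 0) k := fun k j hj ↦ h j (mem_Icc.1 hj).1
    simp [hstays]

variable {Ω : Type*} [MeasurableSpace Ω] {μ : Measure Ω}

theorem integral_tsum_indicator_sdiff [IsFiniteMeasure μ] {G : ℕ → Set Ω} (hG : Antitone G)
    (hGm : ∀ k, MeasurableSet (G k)) {c : ℕ → ℝ} (hc : ∀ k, ‖c k‖ ≤ 1) :
    ∫ ω, ∑' k, (G k \ G (k + 1)).indicator (fun _ ↦ c k) ω ∂μ =
      ∑' k, c k * (μ.real (G k) - μ.real (G (k + 1))) := by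
  have hD : ∀ k, MeasurableSet (G k \ G (k + 1)) := fun k ↦ (hGm k).diff (hGm (k + 1))
  have hdiff : ∀ k, μ.real (G k \ G (k + 1)) = μ.real (G k) - μ.real (G (k + 1)) := fun k ↦
    measureReal_sdiff (hG k.le_succ) (hGm _)
  have hsum : Summable fun k ↦ μ.real (G k \ G (k + 1)) := by
    refine summable_of_sum_range_le (c := μ.real (G 0)) (fun k ↦ measureReal_nonneg) fun n ↦ ?_
    rw [sum_congr rfl fun k _ ↦ hdiff k, sum_range_sub']
    linarith [measureReal_nonneg (μ := μ) (s := G n),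
      measureReal_mono (μ := μ) (hG (Nat.zero_le n))]
  rw [← integral_tsum_of_summable_integral_norm
    (fun k ↦ (integrable_const (c k)).indicator (hD k))]
  · refine tsum_congr fun k ↦ ?_
    rw [integral_indicator_const _ (hD k), hdiff, smul_eq_mul, mul_comm]
  · refine hsum.of_nonneg_of_le (fun k ↦ integral_nonneg fun _ ↦ norm_nonneg _) fun k ↦ ?_
    simp_rw [norm_indicator_eq_indicator_norm]
    rw [integral_indicator_const _ (hD k), smul_eq_mul]
    exact mul_le_of_le_one_right measureReal_nonneg (hc k)

end HittingTime

theorem sparre_andersen_formula_general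
    {Ω : Type*} [MeasurableSpace Ω] (μ : Measure Ω) [IsProbabilityMeasure μ]
    (ρ : ℝ → ℝ)
    (hρsymm : ∀ x, ρ (-x) = ρ x)
    (X : ℕ → Ω → ℝ) (hmeas : ∀ n, Measurable (X n))
    (hindep : iIndepFun X μ)
    (hlaw : ∀ n, Measure.map (X n) μ
      = volume.withDensity (fun x => ENNReal.ofReal (ρ x)))
    (S : ℕ → Ω → ℝ) (hS : ∀ n ω, S n ω = ∑ k ∈ Finset.range n, X k ω)
    (β : ℝ) (hβ : β ∈ Set.Icc (0:ℝ) 1) :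
    ∫ ω, (if ∃ n, 1 ≤ n ∧ 0 < S n ω
          then β ^ sInf {n | 1 ≤ n ∧ 0 < S n ω} else 0) ∂μ
      = 1 - Real.sqrt (1 - β) := by
  obtain rfl : S = fun n ω ↦ ∑ k ∈ range n, X k ω := funext₂ hS
  have : (volume.withDensity fun x ↦ ENNReal.ofReal (ρ x)).IsNegInvariant :=
    isNegInvariant_withDensity fun x ↦ by rw [hρsymm]
  set G : ℕ → Set Ω := fun k ↦ (fun ω i ↦ X i ω) ⁻¹' walkStaysIn (Set.Iic 0) k
  have hG : Antitone G := fun _ _ h ↦ Set.preimage_mono (walkStaysIn_antitone h)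
  have hGm : ∀ k, MeasurableSet (G k) := fun k ↦
    measurable_pi_lambda _ hmeas (measurableSet_walkStaysIn measurableSet_Iic k)
  calc _ = ∫ ω, ∑' k, (G k \ G (k + 1)).indicator (fun _ ↦ β ^ (k + 1)) ω ∂μ :=
        integral_congr_ae (ae_of_all _ fun ω ↦ ite_exists_pos_pow_sInf_eq_tsum (X · ω) β)
    _ = ∑' k, β ^ (k + 1) * (μ.real (G k) - μ.real (G (k + 1))) :=
        integral_tsum_indicator_sdiff hG hGm fun k ↦ by
          rw [Real.norm_of_nonneg (pow_nonneg hβ.1 _)]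
          exact pow_le_one₀ hβ.1 hβ.2
    _ = 1 - √(1 - β) :=
        (hasSum_pow_succ_mul_sub_of_sum_mul_eq_one (fun _ _ h ↦ measureReal_mono (hG h))
          (fun _ ↦ measureReal_nonneg)
          (sum_measureReal_walkStaysIn_mul_eq_one hmeas hindep hlaw) hβ).tsum_eq

/-- Sparre Andersen's formula: for a random walk started at 0 with i.i.d.
increments having a symmetric probability density `ρ`, and `τ_{0+} = inf{n ≥ 1 : S_n > 0}`,
one has `E[β^{τ_{0+}}] = 1 - √(1-β)` for all `β ∈ [0,1]`, with the convention that
`β^{τ_{0+}} = 0` on the event `{τ_{0+} = ∞}`. -/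
theorem sparre_andersen_formula
    {Ω : Type*} [MeasurableSpace Ω] (μ : Measure Ω) [IsProbabilityMeasure μ]
    (ρ : ℝ → ℝ) (hρpos : ∀ x, 0 ≤ ρ x) (hρint : ∫ x, ρ x = 1)
    (hρsymm : ∀ x, ρ (-x) = ρ x)
    (X : ℕ → Ω → ℝ) (hmeas : ∀ n, Measurable (X n))
    (hindep : iIndepFun X μ)
    (hlaw : ∀ n, Measure.map (X n) μ
      = volume.withDensity (fun x => ENNReal.ofReal (ρ x)))
    (S : ℕ → Ω → ℝ) (hS : ∀ n ω, S n ω = ∑ k ∈ Finset.range n, X k ω)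
    (β : ℝ) (hβ : β ∈ Set.Icc (0:ℝ) 1) :
    ∫ ω, (if ∃ n, 1 ≤ n ∧ 0 < S n ω
          then β ^ sInf {n | 1 ≤ n ∧ 0 < S n ω} else 0) ∂μ
      = 1 - Real.sqrt (1 - β) :=
  sparre_andersen_formula_general μ ρ hρsymm X hmeas hindep hlaw S hS β hβ
end

section
/- Let (S_n)_{n≥0} be a random walk started at 0 with i.i.d. increments having a continuous symmetric probability density ρ on ℝ, and let τ_{0+} = inf{n ≥ 1 : S_n > 0}. Then for every n ≥ 1, the density at 0 of S_n restricted to the event {τ_{0+} = n} equals (1/n) ρ^{*n}(0); that is, E[δ_0(S_n); τ_{0+} = n] = (1/n) E[δ_0(S_n)], where E[δ_0(S_n)] = ρ^{*n}(0). -/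
open MeasureTheory

/-- `convN ρ n` is the `(n+1)`-fold convolution `ρ^{*(n+1)}` of `ρ` with itself. -/
noncomputable def convN (ρ : ℝ → ℝ) : ℕ → ℝ → ℝ
  | 0 => ρ
  | n+1 => fun x => ∫ y, convN ρ n (x - y) * ρ y

/-- For `x : Fin m → ℝ`, `ext x i` is the `i`-th point of the bridge path:
`x_{i}` for `1 ≤ i ≤ m` and `0` otherwise (in particular at `i = 0` and `i = m+1`). -/
noncomputable def ext {m : ℕ} (x : Fin m → ℝ) (i : ℕ) : ℝ :=
  if h : 1 ≤ i ∧ i ≤ m then x ⟨i-1, by omega⟩ else 0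

/-!
Write the walk's positions as a closed path `S_0 = 0, S_1, …, S_{n-1}, S_n = 0` and index them
cyclically by `Fin n`. Re-rooting the path at a time `c` (cyclically shifting the increments by `c`)
is a linear map of period `n`, hence of determinant `±1`, so it preserves Lebesgue measure and the
product of the step densities. Off a null set of ties the maximum of the path is attained at exactly
one time, and re-rooting at `c` maps the paths with maximum at `c` onto those with maximum at `0`;
the latter are the paths that stay nonpositive. So the `n` events "maximum at `c`" carry equal mass,
and their total is the density `ρ^{*n}(0)` of the closed path (integrating out the last point
recursively gives the convolution).
-/

open scoped ENNReal

-- The `ℝ≥0∞`-valued counterpart of `convN`, which needs no integrability side conditions.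
noncomputable def lconvN (f : ℝ → ℝ≥0∞) : ℕ → ℝ → ℝ≥0∞
  | 0 => f
  | n + 1 => fun x => ∫⁻ y, lconvN f n (x - y) * f y

section Convolution

variable {f : ℝ → ℝ≥0∞}

theorem measurable_lconvN (hf : Measurable f) : ∀ n, Measurable (lconvN f n)
  | 0 => hf
  | n + 1 => Measurable.lintegral_prod_right'
      (((measurable_lconvN hf n).comp (measurable_fst.sub measurable_snd)).mul
        (hf.comp measurable_snd))

theorem lintegral_lconvN (hf : Measurable f) : ∀ n, ∫⁻ x, lconvN f n x = (∫⁻ x, f x) ^ (n + 1)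
  | 0 => by simp [lconvN]
  | n + 1 => by
    have hL := measurable_lconvN hf n
    calc ∫⁻ x, ∫⁻ y, lconvN f n (x - y) * f y
        = ∫⁻ y, ∫⁻ x, lconvN f n (x - y) * f y :=
          lintegral_lintegral_swap ((hL.comp (measurable_fst.sub measurable_snd)).mul
            (hf.comp measurable_snd)).aemeasurable
      _ = ∫⁻ y, (∫⁻ x, lconvN f n x) * f y := by
          congr 1 with y
          rw [lintegral_mul_const _ (by fun_prop : Measurable fun x => lconvN f n (x - y)),
            lintegral_sub_right_eq_self]
      _ = (∫⁻ x, f x) ^ (n + 2) := by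
          rw [lintegral_const_mul _ hf, lintegral_lconvN hf n, pow_succ _ (n + 1)]

theorem convN_eq_toReal_lconvN {ρ : ℝ → ℝ} (hρ : Measurable ρ) (hpos : ∀ x, 0 ≤ ρ x)
    (hint : Integrable ρ) :
    ∀ n x, convN ρ n x = (lconvN (fun y => ENNReal.ofReal (ρ y)) n x).toReal
  | 0, x => by simp [convN, lconvN, hpos x]
  | n + 1, x => by
    set f := fun y => ENNReal.ofReal (ρ y)
    have hf : Measurable f := ENNReal.measurable_ofReal.comp hρ
    have hfin : ∀ᵐ y, lconvN f n (x - y) < ∞ := by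
      refine (Measure.measurePreserving_sub_left volume x).quasiMeasurePreserving.ae
        (ae_lt_top (measurable_lconvN hf n) ?_)
      rw [lintegral_lconvN hf n, ← ofReal_integral_eq_lintegral_ofReal hint
        (Filter.Eventually.of_forall hpos)]
      exact ENNReal.pow_ne_top ENNReal.ofReal_ne_top
    calc convN ρ (n + 1) x = ∫ y, (lconvN f n (x - y) * f y).toReal := by
          simp only [convN, ENNReal.toReal_mul, f, ENNReal.toReal_ofReal (hpos _),
            convN_eq_toReal_lconvN hρ hpos hint n]
      _ = (lconvN f (n + 1) x).toReal := by
          refine integral_toReal (((measurable_lconvN hf n).comp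
            (measurable_const.sub measurable_id)).mul hf).aemeasurable ?_
          filter_upwards [hfin] with y hy
          exact ENNReal.mul_lt_top hy ENNReal.ofReal_lt_top

end Convolution

section Bridge

@[fun_prop]
theorem measurable_ext (m i : ℕ) : Measurable fun x : Fin m → ℝ => ext x i := by
  unfold ext
  split_ifs
  exacts [measurable_pi_apply _, measurable_const]

theorem ext_snoc_of_le {m i : ℕ} (y : Fin m → ℝ) (t : ℝ) (hi : i ≤ m) :
    ext (Fin.snoc y t : Fin (m + 1) → ℝ) i = ext y i := by
  unfold ext
  by_cases h : 1 ≤ i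
  · rw [dif_pos ⟨h, by omega⟩, dif_pos ⟨h, hi⟩]
    exact Fin.snoc_castSucc (α := fun _ => ℝ) (i := ⟨i - 1, by omega⟩) ..
  · rw [dif_neg (by omega), dif_neg (by omega)]

theorem ext_snoc_self {m : ℕ} (y : Fin m → ℝ) (t : ℝ) :
    ext (Fin.snoc y t : Fin (m + 1) → ℝ) (m + 1) = t := by
  rw [ext, dif_pos ⟨by omega, le_rfl⟩]
  exact Fin.snoc_last (α := fun _ => ℝ) ..

theorem lintegral_pi_fin_succ_eq_snoc {α : Type*} [MeasureSpace α]
    [SigmaFinite (volume : Measure α)] {m : ℕ} {H : (Fin (m + 1) → α) → ℝ≥0∞}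
    (hH : Measurable H) :
    ∫⁻ x, H x = ∫⁻ t, ∫⁻ y : Fin m → α, H (Fin.snoc y t) := by
  rw [← (volume_preserving_piFinSuccAbove (fun _ => α) (Fin.last m)).symm.lintegral_comp hH,
    Measure.volume_eq_prod, lintegral_prod _ (by fun_prop)]
  simp only [MeasurableEquiv.piFinSuccAbove_symm_apply, Fin.insertNthEquiv_last]
  rfl

variable {f : ℝ → ℝ≥0∞}

theorem lintegral_bridge (hf : Measurable f) : ∀ m z,
    ∫⁻ x : Fin m → ℝ, (∏ i ∈ Finset.range m, f (ext x (i + 1) - ext x i)) * f (z - ext x m)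
      = lconvN f m z
  | 0, z => by simp [ext, lconvN, volume_pi]
  | m + 1, z => by
    rw [lintegral_pi_fin_succ_eq_snoc (by fun_prop)]
    calc ∫⁻ t, ∫⁻ y : Fin m → ℝ,
          (∏ i ∈ Finset.range (m + 1), f (ext (Fin.snoc y t : Fin (m + 1) → ℝ) (i + 1)
            - ext (Fin.snoc y t : Fin (m + 1) → ℝ) i))
            * f (z - ext (Fin.snoc y t : Fin (m + 1) → ℝ) (m + 1))
        = ∫⁻ t, ∫⁻ y : Fin m → ℝ,
          (∏ i ∈ Finset.range m, f (ext y (i + 1) - ext y i)) * f (t - ext y m) * f (z - t) := by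
          refine lintegral_congr fun t => lintegral_congr fun y => ?_
          rw [Finset.prod_range_succ, ext_snoc_self, ext_snoc_of_le y t le_rfl]
          congr 2
          refine Finset.prod_congr rfl fun i hi => ?_
          rw [Finset.mem_range] at hi
          rw [ext_snoc_of_le y t (by omega), ext_snoc_of_le y t (by omega)]
      _ = ∫⁻ t, lconvN f m t * f (z - t) := by
          refine lintegral_congr fun t => ?_
          rw [lintegral_mul_const _ (by fun_prop), lintegral_bridge hf m t]
      _ = lconvN f (m + 1) z := by
          rw [← lintegral_sub_left_eq_self _ z]
          simp only [sub_sub_cancel, lconvN]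

end Bridge

theorem LinearMap.measurePreserving_of_pow_eq_one {E : Type*} [NormedAddCommGroup E]
    [NormedSpace ℝ E] [MeasurableSpace E] [BorelSpace E] [FiniteDimensional ℝ E]
    (μ : Measure E) [μ.IsAddHaarMeasure] {f : E →ₗ[ℝ] E} {k : ℕ} (hk : k ≠ 0) (hf : f ^ k = 1) :
    MeasurePreserving f μ μ := by
  have hdet : |LinearMap.det f| = 1 := by
    rw [← pow_eq_one_iff_of_nonneg (abs_nonneg _) hk, ← abs_pow, ← map_pow, hf, map_one, abs_one]
  refine ⟨f.continuous_of_finiteDimensional.measurable, ?_⟩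
  rw [μ.map_linearMap_addHaar_eq_smul_addHaar (fun h => by simp [h] at hdet), abs_inv, hdet,
    inv_one, ENNReal.ofReal_one, one_smul]

section Cyclic

variable {m : ℕ}

-- The positions `0, x 0, …, x (m - 1)` of a closed path, indexed cyclically: time `m + 1` is `0`.
noncomputable def cyclicPath (m : ℕ) : (Fin m → ℝ) →ₗ[ℝ] Fin (m + 1) → ℝ :=
  LinearMap.vecCons 0 LinearMap.id

@[simp]
theorem cyclicPath_zero (x : Fin m → ℝ) : cyclicPath m x 0 = 0 := rfl

@[simp]
theorem cyclicPath_succ (x : Fin m → ℝ) (j : Fin m) : cyclicPath m x j.succ = x j := rfl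

@[fun_prop]
theorem measurable_cyclicPath : Measurable (cyclicPath m) :=
  (cyclicPath m).continuous_of_finiteDimensional.measurable

theorem ext_eq_cyclicPath (x : Fin m → ℝ) (t : Fin (m + 1)) : ext x t = cyclicPath m x t := by
  cases t using Fin.cases with
  | zero => simp [ext]
  | succ j => rw [ext, dif_pos (by simp), cyclicPath_succ]; congr 1

theorem ext_succ_eq_cyclicPath (x : Fin m → ℝ) (t : Fin (m + 1)) :
    ext x (t + 1) = cyclicPath m x (t + 1) := by
  rcases Fin.eq_castSucc_or_eq_last t with ⟨j, rfl⟩ | rfl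
  · rw [Fin.coeSucc_eq_succ, Fin.val_castSucc, ← Fin.val_succ, ext_eq_cyclicPath]
  · rw [Fin.last_add_one, cyclicPath_zero, ext, dif_neg (by simp)]

noncomputable def cyclicWeight {M : Type*} [CommMonoid M] (g : ℝ → M) (x : Fin m → ℝ) : M :=
  ∏ t : Fin (m + 1), g (cyclicPath m x (t + 1) - cyclicPath m x t)

@[fun_prop]
theorem measurable_cyclicWeight {g : ℝ → ℝ≥0∞} (hg : Measurable g) :
    Measurable (cyclicWeight g (m := m)) := by
  unfold cyclicWeight
  fun_prop

theorem prod_range_ext_eq_cyclicWeight {M : Type*} [CommMonoid M] (g : ℝ → M) (x : Fin m → ℝ) :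
    ∏ i ∈ Finset.range (m + 1), g (ext x (i + 1) - ext x i) = cyclicWeight g x := by
  rw [← Fin.prod_univ_eq_prod_range]
  exact Finset.prod_congr rfl fun t _ => by rw [ext_succ_eq_cyclicPath, ext_eq_cyclicPath]

-- Re-rooting the closed path at time `c`, i.e. shifting its increments cyclically by `c`.
noncomputable def rotate (c : Fin (m + 1)) : (Fin m → ℝ) →ₗ[ℝ] Fin m → ℝ :=
  LinearMap.pi (fun j => LinearMap.proj (R := ℝ) (φ := fun _ => ℝ) (j.succ + c)
    - LinearMap.proj c) ∘ₗ cyclicPath m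

theorem cyclicPath_rotate (c t : Fin (m + 1)) (x : Fin m → ℝ) :
    cyclicPath m (rotate c x) t = cyclicPath m x (t + c) - cyclicPath m x c := by
  cases t using Fin.cases with
  | zero => simp
  | succ j => rfl

theorem rotate_mul_rotate (c d : Fin (m + 1)) : rotate c * rotate d = rotate (c + d) := by
  refine LinearMap.ext fun x => funext fun j => ?_
  rw [Module.End.mul_apply, ← cyclicPath_succ (rotate c _), cyclicPath_rotate, cyclicPath_rotate,
    cyclicPath_rotate, ← cyclicPath_succ (rotate (c + d) x), cyclicPath_rotate, add_assoc]
  ring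

theorem rotate_zero : rotate (0 : Fin (m + 1)) = 1 := by
  refine LinearMap.ext fun x => funext fun j => ?_
  rw [← cyclicPath_succ (rotate 0 x), cyclicPath_rotate]
  simp

theorem rotate_pow (c : Fin (m + 1)) (k : ℕ) : rotate c ^ k = rotate (k • c) := by
  induction k with
  | zero => rw [pow_zero, zero_smul, rotate_zero]
  | succ k ih => rw [pow_succ, ih, rotate_mul_rotate, succ_nsmul]

theorem measurePreserving_rotate (c : Fin (m + 1)) : MeasurePreserving (rotate c) :=
  LinearMap.measurePreserving_of_pow_eq_one volume (Nat.succ_ne_zero m) <| by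
    rw [rotate_pow, (by simpa using card_nsmul_eq_zero (x := c) : (m + 1) • c = 0), rotate_zero]

theorem cyclicWeight_rotate {M : Type*} [CommMonoid M] (g : ℝ → M) (c : Fin (m + 1))
    (x : Fin m → ℝ) : cyclicWeight g (rotate c x) = cyclicWeight g x :=
  Fintype.prod_equiv (Equiv.addRight c) _ _ fun t => by
    rw [cyclicPath_rotate, cyclicPath_rotate, sub_sub_sub_cancel_right, Equiv.coe_addRight,
      add_right_comm]

end Cyclic

section StrictMax

variable {m : ℕ}

def strictMaxAt (c : Fin (m + 1)) : Set (Fin m → ℝ) :=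
  {x | ∀ t ≠ c, cyclicPath m x t < cyclicPath m x c}

theorem measurableSet_strictMaxAt (c : Fin (m + 1)) : MeasurableSet (strictMaxAt (m := m) c) := by
  simp only [strictMaxAt, Set.ofPred_forall]
  exact MeasurableSet.iInter fun t => MeasurableSet.iInter fun _ =>
    measurableSet_lt (by fun_prop) (by fun_prop)

theorem rotate_preimage_strictMaxAt_zero (c : Fin (m + 1)) :
    rotate c ⁻¹' strictMaxAt 0 = strictMaxAt c := by
  ext x
  simp only [strictMaxAt, Set.mem_preimage, Set.mem_ofPred_eq, cyclicPath_rotate, zero_add,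
    sub_self, sub_neg]
  refine (Equiv.addRight c).forall_congr fun {t} => ?_
  simp

theorem pairwise_disjoint_strictMaxAt :
    Pairwise (Function.onFun Disjoint (strictMaxAt (m := m))) :=
  fun c d hcd => Set.disjoint_left.mpr fun _ hc hd => (hc d hcd.symm).asymm (hd c hcd)

theorem ae_injective_cyclicPath : ∀ᵐ x : Fin m → ℝ, Function.Injective (cyclicPath m x) := by
  simp only [Function.Injective, ae_all_iff]
  intro c d
  by_cases hcd : c = d
  · exact Filter.Eventually.of_forall fun _ _ => hcd
  let ℓ : (Fin m → ℝ) →ₗ[ℝ] ℝ :=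
    (LinearMap.proj (R := ℝ) (φ := fun _ => ℝ) c - LinearMap.proj d) ∘ₗ cyclicPath m
  have hramp : ∀ t, cyclicPath m (fun j => (j.succ : ℝ)) t = t := by
    intro t; cases t using Fin.cases <;> simp
  have hker : LinearMap.ker ℓ ≠ ⊤ := by
    rw [Ne, LinearMap.ker_eq_top]
    intro h
    have := LinearMap.congr_fun h fun j => (j.succ : ℝ)
    simp only [ℓ, LinearMap.comp_apply, LinearMap.sub_apply, LinearMap.proj_apply, hramp,
      LinearMap.zero_apply, sub_eq_zero, Nat.cast_inj] at this
    exact hcd (Fin.ext this)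
  refine (measure_mono_null (fun x hx => ?_) (Measure.addHaar_submodule volume _ hker))
  simp_all [ℓ]

theorem mem_strictMaxAt_iff {x : Fin m → ℝ} (hx : Function.Injective (cyclicPath m x))
    {c : Fin (m + 1)} : x ∈ strictMaxAt c ↔ ∀ t, cyclicPath m x t ≤ cyclicPath m x c :=
  ⟨fun h t => (eq_or_ne t c).elim (fun htc => htc ▸ le_rfl) fun htc => (h t htc).le,
    fun h t htc => (h t).lt_of_ne (hx.ne htc)⟩

theorem ae_mem_iUnion_strictMaxAt : ∀ᵐ x : Fin m → ℝ, x ∈ ⋃ c, strictMaxAt c := by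
  filter_upwards [ae_injective_cyclicPath] with x hx
  obtain ⟨c, hc⟩ := Finite.exists_max (cyclicPath m x)
  exact Set.mem_iUnion.mpr ⟨c, (mem_strictMaxAt_iff hx).mpr hc⟩

theorem ae_nonpos_eq_strictMaxAt_zero :
    {x : Fin m → ℝ | ∀ i, x i ≤ 0} =ᵐ[volume] strictMaxAt 0 := by
  refine Filter.eventuallyEq_set.mpr ?_
  filter_upwards [ae_injective_cyclicPath] with x hx
  simp [mem_strictMaxAt_iff hx, Fin.forall_fin_succ]

theorem lintegral_eq_mul_setLIntegral_strictMaxAt_zero {W : (Fin m → ℝ) → ℝ≥0∞}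
    (hW : Measurable W) (hrot : ∀ c x, W (rotate c x) = W x) :
    ∫⁻ x, W x = (m + 1) * ∫⁻ x in strictMaxAt 0, W x := by
  have hrestrict : ∀ c, ∫⁻ x in strictMaxAt c, W x = ∫⁻ x in strictMaxAt 0, W x := fun c => by
    rw [← rotate_preimage_strictMaxAt_zero,
      ← (measurePreserving_rotate c).setLIntegral_comp_preimage (measurableSet_strictMaxAt 0) hW]
    simp only [hrot]
  conv_lhs => rw [← Measure.restrict_eq_self_of_ae_mem ae_mem_iUnion_strictMaxAt]
  rw [lintegral_iUnion measurableSet_strictMaxAt pairwise_disjoint_strictMaxAt, tsum_fintype]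
  simp [hrestrict]

end StrictMax

section Main

variable {m : ℕ} {f : ℝ → ℝ≥0∞}

theorem lintegral_cyclicWeight (hf : Measurable f) :
    ∫⁻ x : Fin m → ℝ, cyclicWeight f x = lconvN f m 0 := by
  rw [← lintegral_bridge hf m 0]
  refine lintegral_congr fun x => ?_
  rw [← prod_range_ext_eq_cyclicWeight, Finset.prod_range_succ,
    show ext x (m + 1) = 0 by simp [ext]]

theorem setLIntegral_nonpos_cyclicWeight (hf : Measurable f) :
    ∫⁻ x in {x : Fin m → ℝ | ∀ i, x i ≤ 0}, cyclicWeight f x = lconvN f m 0 / (m + 1 : ℕ) := by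
  rw [setLIntegral_congr ae_nonpos_eq_strictMaxAt_zero, ← lintegral_cyclicWeight hf,
    lintegral_eq_mul_setLIntegral_strictMaxAt_zero (measurable_cyclicWeight hf)
      (cyclicWeight_rotate f), Nat.cast_succ, mul_comm,
    ENNReal.mul_div_cancel_right (by positivity) (by finiteness)]

end Main

theorem cyclic_symmetry_return_density_general
    (ρ : ℝ → ℝ) (hρpos : ∀ x, 0 ≤ ρ x) (hρint : ∫ x, ρ x = 1)
    (hρcont : Continuous ρ)
    (n : ℕ) (hn : 1 ≤ n) :
    ∫ x in {x : Fin (n-1) → ℝ | ∀ i, x i ≤ 0},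
        ∏ i ∈ Finset.range n, ρ (ext x (i+1) - ext x i)
      = convN ρ (n-1) 0 / n := by
  obtain ⟨m, rfl⟩ : ∃ m, n = m + 1 := ⟨n - 1, by omega⟩
  show ∫ x in {x : Fin m → ℝ | ∀ i, x i ≤ 0}, ∏ i ∈ Finset.range (m + 1),
    ρ (ext x (i + 1) - ext x i) = convN ρ m 0 / (m + 1 : ℕ)
  have hρ : Measurable ρ := hρcont.measurable
  have hf : Measurable fun y => ENNReal.ofReal (ρ y) := ENNReal.measurable_ofReal.comp hρ
  rw [integral_eq_lintegral_of_nonneg_ae (Filter.Eventually.of_forall fun x =>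
      Finset.prod_nonneg fun i _ => hρpos _) (by fun_prop)]
  have hofReal : ∀ x : Fin m → ℝ, ENNReal.ofReal (∏ i ∈ Finset.range (m + 1),
      ρ (ext x (i + 1) - ext x i)) = cyclicWeight (fun y => ENNReal.ofReal (ρ y)) x := fun x => by
    rw [ENNReal.ofReal_prod_of_nonneg fun i _ => hρpos _]
    exact prod_range_ext_eq_cyclicWeight (fun y => ENNReal.ofReal (ρ y)) x
  simp only [hofReal]
  rw [setLIntegral_nonpos_cyclicWeight hf, ENNReal.toReal_div, ENNReal.toReal_natCast,
    convN_eq_toReal_lconvN hρ hρpos (integrable_of_integral_eq_one hρint)]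

/-- cyclic symmetry: for a random walk with continuous symmetric step
density `ρ`, the density at 0 of `S_n` on the event `{τ_{0+} = n}` (walk staying
nonpositive at steps `1,…,n−1` and returning to 0 at step `n`) equals `ρ^{*n}(0)/n`:
`∫_{(-∞,0]^{n-1}} ρ(x_1) ρ(x_2−x_1) ⋯ ρ(−x_{n-1}) dx = (1/n) ρ^{*n}(0)`. -/
theorem cyclic_symmetry_return_density
    (ρ : ℝ → ℝ) (hρpos : ∀ x, 0 ≤ ρ x) (hρint : ∫ x, ρ x = 1)
    (hρcont : Continuous ρ) (hρsymm : ∀ x, ρ (-x) = ρ x)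
    (n : ℕ) (hn : 1 ≤ n) :
    ∫ x in {x : Fin (n-1) → ℝ | ∀ i, x i ≤ 0},
        ∏ i ∈ Finset.range n, ρ (ext x (i+1) - ext x i)
      = convN ρ (n-1) 0 / n :=
  cyclic_symmetry_return_density_general ρ hρpos hρint hρcont n hn
end

section
/- For λ ∈ (0,1], (1/(2π)) ∫_ℝ log(1 − λ sech(kπ/2)) dk = 1/4 − (4/π²)(arccos(√((1−λ)/2)))². -/
open MeasureTheory Real Set Filter Topology

/-!
Put `F x = ∫ log (1 - x / cosh t) dt`. For `|x| < 1`, differentiating under the integral gives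
`F' x = -∫ dt / (cosh t - x)`, and the antiderivative
`2 / √(1 - x²) * arctan ((eᵗ - x) / √(1 - x²))` evaluates this to `-(π + 2 arcsin x) / √(1 - x²)`,
the derivative of `-arcsin x * (π + arcsin x)`; both functions vanish at `0`. Fatou's lemma along
`x ↑ 1` makes `log (1 - 1 / cosh t)` integrable, and it dominates the integrand for all `|x| ≤ 1`,
so `F` is continuous on `[-1, 1]` and the identity extends to the endpoints. The substitution
`t = kπ/2` and the half-angle formula `arccos √((1 - x) / 2) = π / 4 + arcsin x / 2` give the
statement.
-/

theorem integrable_of_hasDerivAt_of_nonneg {g g' : ℝ → ℝ} {m n : ℝ}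
    (hderiv : ∀ x, HasDerivAt g (g' x) x) (hg' : ∀ x, 0 ≤ g' x)
    (hbot : Tendsto g atBot (𝓝 m)) (htop : Tendsto g atTop (𝓝 n)) : Integrable g' := by
  have hcont : Continuous g := continuous_iff_continuousAt.2 fun x => (hderiv x).continuousAt
  have hint : ∀ a b : ℝ, IntervalIntegrable g' volume a b := fun a b =>
    intervalIntegrable_iff.2 (intervalIntegral.integrableOn_deriv_of_nonneg hcont.continuousOn
        (fun x _ => hderiv x) fun x _ => hg' x)
  refine integrable_of_intervalIntegral_norm_tendsto (n - m)
    (fun i => (hint (-i) i).1) tendsto_neg_atTop_atBot tendsto_id ?_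
  have hftc : ∀ i : ℝ, ∫ x in -i..i, ‖g' x‖ = g i - g (-i) := fun i => by
    simp only [Real.norm_of_nonneg (hg' _)]
    exact intervalIntegral.integral_eq_sub_of_hasDerivAt (fun x _ => hderiv x) (hint _ _)
  simp only [hftc]
  exact htop.sub (hbot.comp tendsto_neg_atTop_atBot)

theorem hasDerivAt_arctan_exp_sub {x : ℝ} (hx : x ∈ Ioo (-1) 1) (t : ℝ) :
    HasDerivAt (fun t => 2 / √(1 - x ^ 2) * arctan ((exp t - x) / √(1 - x ^ 2)))
      (cosh t - x)⁻¹ t := by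
  have hr2 : √(1 - x ^ 2) ^ 2 = 1 - x ^ 2 := sq_sqrt (by nlinarith [hx.1, hx.2])
  have hr : 0 < √(1 - x ^ 2) := sqrt_pos.2 (by nlinarith [hx.1, hx.2])
  refine ((((hasDerivAt_exp t).sub_const x).div_const _).arctan.const_mul _).congr_deriv ?_
  have hq : 0 < exp t ^ 2 + 1 - 2 * x * exp t := by nlinarith [sq_nonneg (exp t - x), hx.1, hx.2]
  rw [cosh_eq, exp_neg]
  field_simp
  rw [hr2]
  ring

theorem tendsto_arctan_exp_sub_atTop {x : ℝ} (hx : x ∈ Ioo (-1) 1) :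
    Tendsto (fun t => 2 / √(1 - x ^ 2) * arctan ((exp t - x) / √(1 - x ^ 2))) atTop
      (𝓝 (2 / √(1 - x ^ 2) * (π / 2))) := by
  have hr : 0 < √(1 - x ^ 2) := sqrt_pos.2 (by nlinarith [hx.1, hx.2])
  refine (tendsto_nhds_of_tendsto_nhdsWithin tendsto_arctan_atTop).comp ?_ |>.const_mul _
  exact (tendsto_atTop_add_const_right _ (-x) tendsto_exp_atTop).atTop_div_const hr

theorem tendsto_arctan_exp_sub_atBot {x : ℝ} (hx : x ∈ Ioo (-1) 1) :
    Tendsto (fun t => 2 / √(1 - x ^ 2) * arctan ((exp t - x) / √(1 - x ^ 2))) atBot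
      (𝓝 (2 / √(1 - x ^ 2) * -arcsin x)) := by
  rw [arcsin_eq_arctan hx, ← arctan_neg, ← neg_div, ← zero_sub]
  exact ((continuous_arctan.tendsto _).comp
    ((tendsto_exp_atBot.sub_const x).div_const _)).const_mul _

theorem integrable_inv_cosh_sub {x : ℝ} (hx : x ∈ Ioo (-1) 1) :
    Integrable fun t => (cosh t - x)⁻¹ :=
  integrable_of_hasDerivAt_of_nonneg (hasDerivAt_arctan_exp_sub hx)
    (fun t => inv_nonneg.2 (by linarith [one_le_cosh t, hx.2]))
    (tendsto_arctan_exp_sub_atBot hx) (tendsto_arctan_exp_sub_atTop hx)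

theorem integral_inv_cosh_sub {x : ℝ} (hx : x ∈ Ioo (-1) 1) :
    ∫ t, (cosh t - x)⁻¹ = (π + 2 * arcsin x) / √(1 - x ^ 2) := by
  rw [integral_of_hasDerivAt_of_tendsto (hasDerivAt_arctan_exp_sub hx)
    (integrable_inv_cosh_sub hx) (tendsto_arctan_exp_sub_atBot hx)
    (tendsto_arctan_exp_sub_atTop hx)]
  ring

theorem hasDerivAt_log_one_sub_div {c y : ℝ} (hc : c ≠ 0) (hy : y ≠ c) :
    HasDerivAt (fun y => log (1 - y / c)) (-(c - y)⁻¹) y := by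
  have hsub : c - y ≠ 0 := sub_ne_zero.2 hy.symm
  have hne : 1 - y / c ≠ 0 := by rw [one_sub_div hc]; exact div_ne_zero hsub hc
  refine ((((hasDerivAt_id y).div_const c).const_sub 1).log hne).congr_deriv ?_
  simp only [id]
  field_simp

theorem abs_log_one_sub_div_le {c x : ℝ} (hc : |x| < c) :
    |log (1 - x / c)| ≤ |x| / (c - |x|) := by
  have hc0 : 0 < c := (abs_nonneg x).trans_lt hc
  have hcx : 0 < c - |x| := sub_pos.2 hc
  have hcx' : 0 < c - x := by linarith [le_abs_self x]
  have hz : 0 < 1 - x / c := by rw [one_sub_div hc0.ne']; positivity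
  rw [abs_le]
  constructor
  · have hlow := one_sub_inv_le_log_of_pos hz
    have hinv : 1 - (1 - x / c)⁻¹ = -(x / (c - x)) := by
      field_simp; ring
    have hle : x / (c - x) ≤ |x| / (c - |x|) := by
      rcases le_or_gt 0 x with h | h
      · rw [abs_of_nonneg h]
      · exact (div_neg_of_neg_of_pos h hcx').le.trans (by positivity)
    linarith
  · have hup := log_le_sub_one_of_pos hz
    have hle : -(x / c) ≤ |x| / (c - |x|) :=
      calc -(x / c) ≤ |x| / c := by rw [← neg_div]; gcongr; exact neg_le_abs x
        _ ≤ |x| / (c - |x|) := by gcongr; linarith [abs_nonneg x]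
    linarith

theorem aestronglyMeasurable_log_one_sub_div_cosh (x : ℝ) :
    AEStronglyMeasurable (fun t => log (1 - x / cosh t)) volume :=
  (by fun_prop : Measurable fun t => log (1 - x / cosh t)).aestronglyMeasurable

theorem integrable_log_one_sub_div_cosh {x : ℝ} (hx : x ∈ Ioo (-1) 1) :
    Integrable fun t => log (1 - x / cosh t) := by
  have habs : |x| ∈ Ioo (-1) 1 := ⟨by linarith [abs_nonneg x], abs_lt.2 hx⟩
  refine ((integrable_inv_cosh_sub habs).const_mul |x|).mono'
    (aestronglyMeasurable_log_one_sub_div_cosh x) (ae_of_all _ fun t => ?_)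
  rw [norm_eq_abs, ← div_eq_mul_inv]
  exact abs_log_one_sub_div_le (by linarith [one_le_cosh t, habs.2])

theorem hasDerivAt_integral_log_one_sub_div_cosh {x : ℝ} (hx : x ∈ Ioo (-1) 1) :
    HasDerivAt (fun y => ∫ t, log (1 - y / cosh t)) (-∫ t, (cosh t - x)⁻¹) x := by
  have hb : (1 + x) / 2 ∈ Ioo (-1) 1 := ⟨by linarith [hx.1], by linarith [hx.2]⟩
  have hpos : ∀ t, ∀ y ∈ Iio ((1 + x) / 2), 0 < cosh t - y := fun t y hy => by
    linarith [one_le_cosh t, hb.2, mem_Iio.1 hy]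
  rw [← integral_neg]
  refine (hasDerivAt_integral_of_dominated_loc_of_deriv_le (F' := fun y t => -(cosh t - y)⁻¹)
    (Iio_mem_nhds (show x < (1 + x) / 2 by linarith [hx.2]))
    (Eventually.of_forall fun y => aestronglyMeasurable_log_one_sub_div_cosh y)
    (integrable_log_one_sub_div_cosh hx) (by fun_prop) (ae_of_all _ fun t y hy => ?_)
    (integrable_inv_cosh_sub hb) (ae_of_all _ fun t y hy => ?_)).2
  · rw [norm_neg, norm_inv, norm_of_nonneg (hpos t y hy).le]
    exact inv_anti₀ (by linarith [one_le_cosh t, hb.2]) (by linarith [mem_Iio.1 hy])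
  · exact hasDerivAt_log_one_sub_div (cosh_pos t).ne' (sub_pos.1 (hpos t y hy)).ne

theorem hasDerivAt_arcsin_mul_pi_add_arcsin {x : ℝ} (hx : x ∈ Ioo (-1) 1) :
    HasDerivAt (fun y => arcsin y * (π + arcsin y)) ((π + 2 * arcsin x) / √(1 - x ^ 2)) x := by
  have h := hasDerivAt_arcsin hx.1.ne' hx.2.ne
  refine (h.mul (h.const_add π)).congr_deriv ?_
  ring

theorem integral_log_one_sub_div_cosh_eqOn_Ioo :
    EqOn (fun x => ∫ t, log (1 - x / cosh t)) (fun x => -(arcsin x * (π + arcsin x)))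
      (Ioo (-1) 1) := by
  have hF : ∀ x ∈ Ioo (-1 : ℝ) 1, HasDerivAt (fun y => ∫ t, log (1 - y / cosh t))
      (-((π + 2 * arcsin x) / √(1 - x ^ 2))) x := fun x hx => by
    simpa only [integral_inv_cosh_sub hx] using hasDerivAt_integral_log_one_sub_div_cosh hx
  have hG : ∀ x ∈ Ioo (-1 : ℝ) 1, HasDerivAt (fun y => -(arcsin y * (π + arcsin y)))
      (-((π + 2 * arcsin x) / √(1 - x ^ 2))) x := fun x hx =>
    (hasDerivAt_arcsin_mul_pi_add_arcsin hx).neg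
  refine isOpen_Ioo.eqOn_of_deriv_eq isPreconnected_Ioo
    (fun x hx => (hF x hx).differentiableAt.differentiableWithinAt)
    (fun x hx => (hG x hx).differentiableAt.differentiableWithinAt)
    (fun x hx => (hF x hx).deriv.trans (hG x hx).deriv.symm)
    (show (0 : ℝ) ∈ Ioo (-1) 1 by norm_num) ?_
  simp

theorem abs_log_one_sub_mul_le {s x : ℝ} (hs : s ∈ Ioo 0 1) (hx : |x| ≤ 1) :
    |log (1 - x * s)| ≤ |log (1 - s)| := by
  obtain ⟨hs0, hs1⟩ := hs
  have hlog_s : log (1 - s) ≤ -s := by linarith [log_le_sub_one_of_pos (sub_pos.2 hs1)]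
  rw [abs_of_nonpos (by linarith : log (1 - s) ≤ 0)]
  rcases le_or_gt 0 x with hx0 | hx0
  · have hxs : x * s ≤ s := mul_le_of_le_one_left hs0.le (le_of_abs_le hx)
    rw [abs_of_nonpos (log_nonpos (by linarith) (by nlinarith))]
    linarith [log_le_log (sub_pos.2 hs1) (by linarith : 1 - s ≤ 1 - x * s)]
  · have hxs : -s ≤ x * s := by nlinarith [neg_abs_le x]
    have hpos : 0 < 1 - x * s := by nlinarith
    rw [abs_of_nonneg (log_nonneg (by nlinarith))]
    linarith [log_le_sub_one_of_pos hpos]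

theorem abs_log_one_sub_div_cosh_le {x t : ℝ} (hx : |x| ≤ 1) (ht : t ≠ 0) :
    |log (1 - x / cosh t)| ≤ |log (1 - 1 / cosh t)| := by
  rw [div_eq_mul_inv, one_div]
  exact abs_log_one_sub_mul_le ⟨inv_pos.2 (cosh_pos t), inv_lt_one_of_one_lt₀ (one_lt_cosh.2 ht)⟩ hx

theorem integrable_log_one_sub_one_div_cosh : Integrable fun t => log (1 - 1 / cosh t) := by
  set x : ℕ → ℝ := fun n => n / (n + 1)
  have hx : ∀ n, x n ∈ Ioo (-1) 1 := fun n =>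
    ⟨by linarith [show 0 ≤ x n by positivity], (div_lt_one (by positivity)).2 (by linarith)⟩
  have hlim : Tendsto x atTop (𝓝 1) := tendsto_natCast_div_add_atTop 1
  have hnorm : ∀ n, ∫⁻ t, ‖log (1 - x n / cosh t)‖ₑ =
      ENNReal.ofReal (arcsin (x n) * (π + arcsin (x n))) := fun n => by
    have hnonpos : ∀ t, log (1 - x n / cosh t) ≤ 0 := fun t => by
      have h0 : 0 ≤ x n / cosh t := by positivity
      have h1 : x n / cosh t ≤ 1 :=
        (div_le_one (cosh_pos t)).2 (by linarith [one_le_cosh t, (hx n).2])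
      exact log_nonpos (by linarith) (by linarith)
    rw [← ofReal_integral_norm_eq_lintegral_enorm (integrable_log_one_sub_div_cosh (hx n))]
    simp only [norm_of_nonpos (hnonpos _), integral_neg,
      integral_log_one_sub_div_cosh_eqOn_Ioo (hx n), neg_neg]
  refine integrable_of_tendsto (G := fun n t => log (1 - x n / cosh t)) ?_
    (fun n => aestronglyMeasurable_log_one_sub_div_cosh _) ?_
  · filter_upwards [Measure.ae_ne volume 0] with t ht
    have hne : 1 - 1 / cosh t ≠ 0 :=
      (sub_pos.2 ((div_lt_one (cosh_pos t)).2 (one_lt_cosh.2 ht))).ne'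
    exact ((continuousAt_log hne).tendsto.comp ((hlim.div_const _).const_sub 1))
  · have hlim' : Tendsto (fun n => arcsin (x n) * (π + arcsin (x n))) atTop
        (𝓝 (arcsin 1 * (π + arcsin 1))) := by
      have harcsin := (continuous_arcsin.tendsto 1).comp hlim
      exact harcsin.mul (harcsin.const_add π)
    simp only [hnorm]
    exact ((ENNReal.continuous_ofReal.tendsto _).comp hlim').liminf_eq.trans_ne
      ENNReal.ofReal_ne_top

theorem continuousOn_integral_log_one_sub_div_cosh :
    ContinuousOn (fun x => ∫ t, log (1 - x / cosh t)) (Icc (-1) 1) := by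
  refine continuousOn_of_dominated
    (fun x _ => aestronglyMeasurable_log_one_sub_div_cosh x)
    (fun x hx => ?_) integrable_log_one_sub_one_div_cosh.norm ?_
  · filter_upwards [Measure.ae_ne volume 0] with t ht
    exact abs_log_one_sub_div_cosh_le (abs_le.2 hx) ht
  · filter_upwards [Measure.ae_ne volume 0] with t ht
    refine ContinuousOn.log (by fun_prop) fun x hx => (sub_pos.2 ?_).ne'
    calc x / cosh t ≤ 1 / cosh t := div_le_div_of_nonneg_right hx.2 (cosh_pos t).le
      _ < 1 := (div_lt_one (cosh_pos t)).2 (one_lt_cosh.2 ht)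

theorem integral_log_one_sub_div_cosh {x : ℝ} (hx : x ∈ Icc (-1) 1) :
    ∫ t, log (1 - x / cosh t) = -(arcsin x * (π + arcsin x)) :=
  integral_log_one_sub_div_cosh_eqOn_Ioo.of_subset_closure
    continuousOn_integral_log_one_sub_div_cosh
    (continuous_arcsin.mul (continuous_arcsin.const_add π)).neg.continuousOn
    Ioo_subset_Icc_self (closure_Ioo (by norm_num)).symm.subset hx

theorem arccos_sqrt_one_sub_div_two {x : ℝ} (hx : x ∈ Icc (-1) 1) :
    arccos √((1 - x) / 2) = π / 4 + arcsin x / 2 := by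
  have h1 := neg_pi_div_two_le_arcsin x
  have h2 := arcsin_le_pi_div_two x
  have hcos : 0 ≤ cos (π / 4 + arcsin x / 2) :=
    cos_nonneg_of_mem_Icc ⟨by linarith, by linarith⟩
  have hsq : cos (π / 4 + arcsin x / 2) ^ 2 = (1 - x) / 2 := by
    rw [cos_sq, show 2 * (π / 4 + arcsin x / 2) = arcsin x + π / 2 by ring, cos_add_pi_div_two,
      sin_arcsin hx.1 hx.2]
    ring
  rw [← hsq, sqrt_sq hcos, arccos_cos (by linarith) (by linarith)]

/-- for `λ ∈ (0,1]`,
`(1/(2π)) ∫_ℝ log(1 − λ sech(kπ/2)) dk = 1/4 − (4/π²)(arccos √((1−λ)/2))²`. -/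
theorem sech_log_integral_at_zero (l : ℝ) (hl : l ∈ Set.Ioc (0:ℝ) 1) :
    (1 / (2 * π)) * ∫ k : ℝ, Real.log (1 - l * (1 / Real.cosh (k * π / 2)))
      = 1/4 - (4 / π^2) * (Real.arccos (Real.sqrt ((1 - l)/2)))^2 := by
  have hl' : l ∈ Icc (-1) 1 := ⟨by linarith [hl.1], hl.2⟩
  have hscale : ∫ k : ℝ, log (1 - l * (1 / cosh (k * π / 2))) =
      2 / π * ∫ t, log (1 - l / cosh t) := by
    simp only [mul_one_div, mul_div_assoc]
    rw [Measure.integral_comp_mul_right (fun t => log (1 - l / cosh t)) (π / 2),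
      abs_of_pos (by positivity), inv_div, smul_eq_mul]
  rw [hscale, integral_log_one_sub_div_cosh hl', arccos_sqrt_one_sub_div_two hl']
  field_simp
  ring
end

section
/- Let ρ(x) = (2/√π) exp(x − e^{2x}) for x ∈ ℝ. Then ρ is a probability density and its symmetric self-correlation ρ̃(z) = ∫_ℝ ρ(w) ρ(w − z) dw equals (1/π) sech(z) for all z ∈ ℝ. -/
/-!
Both integrals reduce to Gaussian moments under the substitution `u = eˣ`. Since
`e^{x - e^{2x}} = eˣ · e^{-u²}`, the total mass is `(2/√π) ∫₀^∞ e^{-u²} du = 1`. In the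
correlation, `e^{2(w-z)} = e^{-2z} u²`, so the integrand becomes
`(4/π) e^{-z} · eʷ · u e^{-(1 + e^{-2z}) u²}`, whose integral `(4/π) e^{-z} / (2 (1 + e^{-2z}))`
equals `1 / (π cosh z)`.
-/

open Real MeasureTheory Set

theorem integral_exp_smul_comp_exp {E : Type*} [NormedAddCommGroup E] [NormedSpace ℝ E]
    (g : ℝ → E) : ∫ x, exp x • g (exp x) = ∫ u in Ioi 0, g u := by
  have h := integral_image_eq_integral_abs_deriv_smul MeasurableSet.univ
    (fun x _ => (hasDerivAt_exp x).hasDerivWithinAt) exp_injective.injOn g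
  rw [image_univ, range_exp] at h
  simpa [abs_of_pos (exp_pos _)] using h.symm

theorem integral_Ioi_mul_exp_neg_mul_sq {b : ℝ} (hb : 0 < b) :
    ∫ r in Ioi (0 : ℝ), r * exp (-b * r ^ 2) = (2 * b)⁻¹ := by
  have h : ((∫ r in Ioi (0 : ℝ), r * exp (-b * r ^ 2) : ℝ) : ℂ) = ((2 * b)⁻¹ : ℝ) := by
    rw [← integral_complex_ofReal]
    push_cast
    exact integral_mul_cexp_neg_mul_sq (by simpa using hb)
  exact_mod_cast h

/-- The density `ρ` without its normalising factor `2 / √π`. -/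
noncomputable def expGumbel (x : ℝ) : ℝ := exp (x - exp (2 * x))

theorem expGumbel_eq (x : ℝ) : expGumbel x = exp x * exp (-1 * exp x ^ 2) := by
  rw [expGumbel, ← exp_add, ← exp_nat_mul]
  ring_nf

theorem expGumbel_mul_expGumbel_sub (w z : ℝ) :
    expGumbel w * expGumbel (w - z) =
      exp w * (exp (-z) * (exp w * exp (-(1 + exp (-(2 * z))) * exp w ^ 2))) := by
  have hw : exp (2 * w) = exp w ^ 2 := by rw [← exp_nat_mul]; norm_num
  have hwz : exp (2 * (w - z)) = exp (-(2 * z)) * exp w ^ 2 := by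
    rw [← hw, ← exp_add]; ring_nf
  rw [expGumbel, expGumbel, hw, hwz]
  simp only [← exp_add]
  ring_nf

theorem integral_expGumbel : ∫ x, expGumbel x = √π / 2 := by
  have hsubst := integral_exp_smul_comp_exp fun u => exp (-1 * u ^ 2)
  simp only [smul_eq_mul] at hsubst
  simp_rw [expGumbel_eq, hsubst, integral_gaussian_Ioi, div_one]

theorem integral_expGumbel_mul_expGumbel_sub (z : ℝ) :
    ∫ w, expGumbel w * expGumbel (w - z) =
      exp (-z) * (2 * (1 + exp (-(2 * z))))⁻¹ := by
  have hsubst := integral_exp_smul_comp_exp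
    fun u => exp (-z) * (u * exp (-(1 + exp (-(2 * z))) * u ^ 2))
  simp only [smul_eq_mul] at hsubst
  simp_rw [expGumbel_mul_expGumbel_sub, hsubst, integral_const_mul,
    integral_Ioi_mul_exp_neg_mul_sq (by positivity : (0 : ℝ) < 1 + exp (-(2 * z)))]

theorem inv_cosh_eq_two_mul_exp_neg_div (z : ℝ) :
    (cosh z)⁻¹ = 2 * exp (-z) / (1 + exp (-(2 * z))) := by
  have h : exp (-(2 * z)) = exp (-z) * exp (-z) := by rw [← exp_add]; ring_nf
  rw [cosh_eq, h, exp_neg z]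
  field_simp

/-- `ρ(x) = (2/√π) exp(x − e^{2x})` is a probability density and its
symmetric self-correlation `ρ̃(z) = ∫ ρ(w) ρ(w−z) dw` equals `(1/π) sech(z)`. -/
theorem exp_gumbel_density_sech
    (ρ : ℝ → ℝ)
    (hρ : ∀ x, ρ x = (2 / Real.sqrt π) * Real.exp (x - Real.exp (2*x))) :
    (∀ x, 0 ≤ ρ x) ∧ (∫ x, ρ x = 1) ∧
      (∀ z, ∫ w, ρ w * ρ (w - z) = (1/π) * (1 / Real.cosh z)) := by
  have hπ : √π ≠ 0 := (sqrt_pos.mpr pi_pos).ne'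
  replace hρ : ∀ x, ρ x = 2 / √π * expGumbel x := hρ
  refine ⟨fun x => by rw [hρ, expGumbel]; positivity, ?_, fun z => ?_⟩
  · simp_rw [hρ, integral_const_mul, integral_expGumbel]
    field_simp
  · have hcorr : ∀ w, ρ w * ρ (w - z) = (2 / √π) ^ 2 * (expGumbel w * expGumbel (w - z)) := by
      intro w; rw [hρ, hρ]; ring
    simp_rw [hcorr, integral_const_mul, integral_expGumbel_mul_expGumbel_sub,
      one_div (cosh z), inv_cosh_eq_two_mul_exp_neg_div, div_pow, sq_sqrt pi_pos.le]
    field_simp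
end
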